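/- arXiv:1904.12976 — 6 statements merged into one kernel-verified Lean document; each statement's English description precedes it below -/
import Mathlib

section
/- Let M be an entrywise nonnegative n×n real matrix and γ > 0 a real number. Then the maximum singular value of M is strictly less than γ if and only if there exist entrywise positive vectors u, v ∈ ℝⁿ such that M u < γ v and Mᵀ v < γ u (inequalities entrywise). -/
open Matrix

section Aux

/-- Spectral decomposition sums for a real symmetric matrix. -/
lemma sigma_aux_spec_sums {n : ℕ} (A : Matrix (Fin n) (Fin n) ℝ) (hA : A.IsHermitian)
    (x : Fin n → ℝ) :
    ∃ c : Fin n → ℝ, (∑ i, c i ^ 2 = ∑ i, x i ^ 2) ∧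
      (x ⬝ᵥ (A *ᵥ x) = ∑ i, hA.eigenvalues i * c i ^ 2) ∧
      (∑ i, ((A *ᵥ x) i) ^ 2 = ∑ i, (hA.eigenvalues i) ^ 2 * c i ^ 2) := by
  classical
  set U : Matrix (Fin n) (Fin n) ℝ := (hA.eigenvectorUnitary : Matrix (Fin n) (Fin n) ℝ) with hU
  have hUmem := hA.eigenvectorUnitary.2
  have h1 : Uᵀ * U = 1 := by
    have := (Unitary.mem_iff.mp hUmem).1
    rwa [Matrix.star_eq_conjTranspose, Matrix.conjTranspose_eq_transpose_of_trivial] at this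
  have h2 : U * Uᵀ = 1 := by
    have := (Unitary.mem_iff.mp hUmem).2
    rwa [Matrix.star_eq_conjTranspose, Matrix.conjTranspose_eq_transpose_of_trivial] at this
  have hdiag : A = U * Matrix.diagonal hA.eigenvalues * Uᵀ := by
    have := hA.spectral_theorem
    rwa [Unitary.conjStarAlgAut_apply, Matrix.star_eq_conjTranspose, Matrix.conjTranspose_eq_transpose_of_trivial,
      show (RCLike.ofReal ∘ hA.eigenvalues : Fin n → ℝ) = hA.eigenvalues from rfl] at this
  set c : Fin n → ℝ := Uᵀ *ᵥ x with hc
  have key : ∀ y z : Fin n → ℝ, (U *ᵥ y) ⬝ᵥ (U *ᵥ z) = y ⬝ᵥ z := by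
    intro y z
    rw [dotProduct_mulVec, ← Matrix.mulVec_transpose, Matrix.mulVec_mulVec, h1,
      Matrix.one_mulVec]
  have keyT : ∀ y z : Fin n → ℝ, (Uᵀ *ᵥ y) ⬝ᵥ (Uᵀ *ᵥ z) = y ⬝ᵥ z := by
    intro y z
    rw [dotProduct_mulVec, ← Matrix.mulVec_transpose, Matrix.transpose_transpose,
      Matrix.mulVec_mulVec, h2, Matrix.one_mulVec]
  have hAx : A *ᵥ x = U *ᵥ (fun i => hA.eigenvalues i * c i) := by
    conv_lhs => rw [hdiag]
    rw [← Matrix.mulVec_mulVec, ← Matrix.mulVec_mulVec]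
    have hd : Matrix.diagonal hA.eigenvalues *ᵥ (Uᵀ *ᵥ x) = fun i => hA.eigenvalues i * c i :=
      funext fun i => Matrix.mulVec_diagonal _ _ _
    rw [hd]
  have sq_eq_dot : ∀ y : Fin n → ℝ, ∑ i, y i ^ 2 = y ⬝ᵥ y := by
    intro y; simp [dotProduct, sq]
  refine ⟨c, ?_, ?_, ?_⟩
  · rw [sq_eq_dot, sq_eq_dot, hc, keyT]
  · rw [hAx]
    have : x ⬝ᵥ (U *ᵥ fun i => hA.eigenvalues i * c i)
        = c ⬝ᵥ (fun i => hA.eigenvalues i * c i) := by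
      rw [dotProduct_mulVec, ← Matrix.mulVec_transpose]
    rw [this]
    simp only [dotProduct]
    exact Finset.sum_congr rfl fun i _ => by ring
  · rw [hAx, sq_eq_dot, key]
    simp only [dotProduct]
    exact Finset.sum_congr rfl fun i _ => by ring

/-- Any element of the real spectrum of a real matrix has a real eigenvector. -/
lemma sigma_aux_spectrum_eigenvector {n : ℕ} (A : Matrix (Fin n) (Fin n) ℝ) (t : ℝ)
    (ht : t ∈ spectrum ℝ A) : ∃ x : Fin n → ℝ, x ≠ 0 ∧ A *ᵥ x = t • x := by
  classical
  rw [spectrum.mem_iff, Matrix.isUnit_iff_isUnit_det, isUnit_iff_ne_zero, not_not,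
    ← Matrix.exists_mulVec_eq_zero_iff] at ht
  obtain ⟨x, hx, hx0⟩ := ht
  refine ⟨x, hx, ?_⟩
  rw [Matrix.sub_mulVec, sub_eq_zero, Algebra.algebraMap_eq_smul_one,
    smul_mulVec, Matrix.one_mulVec] at hx0
  exact hx0.symm

/-- For `A = Mᵀ * M`, the quadratic form of `A` is the squared norm under `M`. -/
lemma sigma_aux_quad {n : ℕ} (M : Matrix (Fin n) (Fin n) ℝ) (x : Fin n → ℝ) :
    x ⬝ᵥ ((Mᵀ * M) *ᵥ x) = ∑ i, ((M *ᵥ x) i) ^ 2 := by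
  rw [← Matrix.mulVec_mulVec, dotProduct_mulVec, ← Matrix.mulVec_transpose,
    Matrix.transpose_transpose]
  simp [dotProduct, sq]

lemma sigma_aux_dot_pos {n : ℕ} (x : Fin n → ℝ) (hx : x ≠ 0) : 0 < ∑ i, x i ^ 2 := by
  have h1 : ∃ i, x i ≠ 0 := by
    by_contra h
    push_neg at h
    exact hx (funext fun i => h i)
  obtain ⟨i, hi⟩ := h1
  have : 0 < x i ^ 2 := by positivity
  exact lt_of_lt_of_le this (Finset.single_le_sum (fun j _ => sq_nonneg (x j)) (Finset.mem_univ i))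

end Aux

/-- The maximum singular value of a real matrix: the square root of the
largest real eigenvalue of `Mᵀ * M`. -/
noncomputable def maxSingularValue {m n : ℕ} (M : Matrix (Fin m) (Fin n) ℝ) : ℝ :=
  Real.sqrt (sSup (spectrum ℝ (Mᵀ * M)))

theorem nonneg_matrix_sigma_max_lt_iff (n : ℕ) (M : Matrix (Fin n) (Fin n) ℝ)
    (hM : ∀ i j, 0 ≤ M i j) (γ : ℝ) (hγ : 0 < γ) :
    maxSingularValue M < γ ↔
      ∃ u v : Fin n → ℝ, (∀ i, 0 < u i) ∧ (∀ i, 0 < v i) ∧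
        (∀ i, M.mulVec u i < γ * v i) ∧ (∀ i, Mᵀ.mulVec v i < γ * u i) := by
  classical
  have hMT : Mᴴ = Mᵀ := Matrix.conjTranspose_eq_transpose_of_trivial M
  have hA : (Mᵀ * M).IsHermitian := by
    rw [← hMT]; exact Matrix.isHermitian_conjTranspose_mul_self M
  set A : Matrix (Fin n) (Fin n) ℝ := Mᵀ * M with hAdef
  -- trivial case n = 0
  rcases Nat.eq_zero_or_pos n with hn | hn
  · subst hn
    constructor
    · intro _
      exact ⟨fun i => 1, fun i => 1, fun i => i.elim0, fun i => i.elim0,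
        fun i => i.elim0, fun i => i.elim0⟩
    · intro _
      have hspec : spectrum ℝ A = ∅ := by
        ext t
        simp only [Set.mem_empty_iff_false, iff_false]
        intro ht
        rw [spectrum.mem_iff] at ht
        exact ht (isUnit_of_subsingleton _)
      rw [maxSingularValue, ← hAdef, hspec, Real.sSup_empty, Real.sqrt_zero]
      exact hγ
  have : NeZero n := ⟨hn.ne'⟩
  have i0 : Fin n := ⟨0, hn⟩
  have hne : (Finset.univ : Finset (Fin n)).Nonempty := Finset.univ_nonempty
  -- eigenvalues of A are nonnegative
  have heig_nonneg : ∀ i, 0 ≤ hA.eigenvalues i := by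
    intro i
    have hb := hA.mulVec_eigenvectorBasis i
    set b : Fin n → ℝ := ⇑(hA.eigenvectorBasis i) with hbdef
    have hbne : b ≠ 0 := by
      have := hA.eigenvectorBasis.orthonormal.ne_zero i
      intro h
      apply this
      ext j
      exact congrFun h j
    have hq : b ⬝ᵥ (A *ᵥ b) = hA.eigenvalues i * ∑ j, b j ^ 2 := by
      rw [hb]
      simp [dotProduct, sq, Finset.mul_sum]
      exact Finset.sum_congr rfl fun j _ => by ring
    have hq2 : b ⬝ᵥ (A *ᵥ b) = ∑ j, ((M *ᵥ b) j) ^ 2 := sigma_aux_quad M b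
    have hpos := sigma_aux_dot_pos b hbne
    nlinarith [Finset.sum_nonneg (fun j (_ : j ∈ Finset.univ) => sq_nonneg ((M *ᵥ b) j))]
  -- the largest eigenvalue
  set s : ℝ := Finset.univ.sup' hne hA.eigenvalues with hsdef
  have hs_mem : ∃ i, hA.eigenvalues i = s := by
    obtain ⟨i, hi⟩ := Finset.exists_mem_eq_sup' hne hA.eigenvalues
    exact ⟨i, hi.2.symm⟩
  have hs_le : ∀ i, hA.eigenvalues i ≤ s := fun i => Finset.le_sup' _ (Finset.mem_univ i)
  have hs_nonneg : 0 ≤ s := le_trans (heig_nonneg i0) (hs_le i0)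
  -- Rayleigh: every real spectrum element is at most s, and s is in the spectrum
  have hspec_le : ∀ t ∈ spectrum ℝ A, t ≤ s := by
    intro t ht
    obtain ⟨x, hx, hx0⟩ := sigma_aux_spectrum_eigenvector A t ht
    obtain ⟨c, hc1, hc2, _⟩ := sigma_aux_spec_sums A hA x
    have hray : x ⬝ᵥ (A *ᵥ x) ≤ s * ∑ i, x i ^ 2 := by
      rw [hc2, ← hc1, Finset.mul_sum]
      exact Finset.sum_le_sum fun i _ => mul_le_mul_of_nonneg_right (hs_le i) (sq_nonneg _)
    have hxq : x ⬝ᵥ (A *ᵥ x) = t * ∑ i, x i ^ 2 := by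
      rw [hx0]
      simp [dotProduct, sq, Finset.mul_sum]
      exact Finset.sum_congr rfl fun j _ => by ring
    have hpos := sigma_aux_dot_pos x hx
    nlinarith
  have hbdd : BddAbove (spectrum ℝ A) := ⟨s, fun t ht => hspec_le t ht⟩
  have hsSup_eq : sSup (spectrum ℝ A) = s := by
    apply le_antisymm
    · exact Real.sSup_le hspec_le hs_nonneg
    · obtain ⟨i, hi⟩ := hs_mem
      exact hi ▸ le_csSup hbdd (hA.eigenvalues_mem_spectrum_real i)
  have hmsv : maxSingularValue M < γ ↔ s < γ ^ 2 := by
    rw [maxSingularValue, ← hAdef, hsSup_eq, Real.sqrt_lt' hγ]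
  rw [hmsv]
  constructor
  · -- forward: s < γ² implies certificate exists
    intro hsγ
    -- bound on iterated quadratic sums
    have hL1 : ∀ x : Fin n → ℝ, ∑ i, ((A *ᵥ x) i) ^ 2 ≤ s ^ 2 * ∑ i, x i ^ 2 := by
      intro x
      obtain ⟨c, hc1, _, hc3⟩ := sigma_aux_spec_sums A hA x
      rw [hc3, ← hc1, Finset.mul_sum]
      refine Finset.sum_le_sum fun i _ => mul_le_mul_of_nonneg_right ?_ (sq_nonneg _)
      exact pow_le_pow_left₀ (heig_nonneg i) (hs_le i) 2
    -- entries of A are nonneg, powers of A are entrywise nonneg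
    have hAnn : ∀ i j, 0 ≤ A i j := by
      intro i j
      rw [hAdef, Matrix.mul_apply]
      exact Finset.sum_nonneg fun k _ => mul_nonneg (hM k i) (hM k j)
    have hAk : ∀ k : ℕ, ∀ i j, 0 ≤ (A ^ k) i j := by
      intro k
      induction k with
      | zero => intro i j; rw [pow_zero]; by_cases h : i = j <;> simp [Matrix.one_apply, h]
      | succ m ih =>
        intro i j
        rw [pow_succ, Matrix.mul_apply]
        exact Finset.sum_nonneg fun l _ => mul_nonneg (ih i l) (hAnn l j)
    have hmulVec_nn : ∀ (B : Matrix (Fin n) (Fin n) ℝ) (y : Fin n → ℝ),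
        (∀ i j, 0 ≤ B i j) → (∀ j, 0 ≤ y j) → ∀ i, 0 ≤ (B *ᵥ y) i := by
      intro B y hB hy i
      rw [Matrix.mulVec, dotProduct]
      exact Finset.sum_nonneg fun j _ => mul_nonneg (hB i j) (hy j)
    -- the positive vector w
    set one : Fin n → ℝ := fun _ => 1 with hone
    set w : Fin n → ℝ := fun i => γ⁻¹ * ((Mᵀ *ᵥ one) i) + 1 with hwdef
    have hw_nn : ∀ i, (1:ℝ) ≤ w i := by
      intro i
      have h1 : 0 ≤ (Mᵀ *ᵥ one) i :=
        hmulVec_nn Mᵀ one (fun i j => hM j i) (fun _ => zero_le_one) i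
      have h2 : w i = γ⁻¹ * (Mᵀ *ᵥ one) i + 1 := by rw [hwdef]
      rw [h2]
      linarith [mul_nonneg (inv_pos.mpr hγ).le h1]
    have hw_pos : ∀ i, (0:ℝ) < w i := fun i => lt_of_lt_of_le one_pos (hw_nn i)
    -- iterated bound
    have hiter : ∀ k : ℕ, ∑ i, ((A ^ k *ᵥ w) i) ^ 2 ≤ (s ^ 2) ^ k * ∑ i, w i ^ 2 := by
      intro k
      induction k with
      | zero => simp [Matrix.one_mulVec]
      | succ m ih =>
        have h1 : (A ^ (m+1)) *ᵥ w = A *ᵥ (A ^ m *ᵥ w) := by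
          rw [Matrix.mulVec_mulVec, ← pow_succ']
        rw [h1]
        calc ∑ i, ((A *ᵥ (A ^ m *ᵥ w)) i) ^ 2 ≤ s ^ 2 * ∑ i, ((A ^ m *ᵥ w) i) ^ 2 := hL1 _
          _ ≤ s ^ 2 * ((s ^ 2) ^ m * ∑ i, w i ^ 2) :=
              mul_le_mul_of_nonneg_left ih (sq_nonneg s)
          _ = (s ^ 2) ^ (m + 1) * ∑ i, w i ^ 2 := by ring
    -- choose N
    set qw : ℝ := ∑ i, w i ^ 2 with hqw
    have hqw_nn : 0 ≤ qw := Finset.sum_nonneg fun i _ => sq_nonneg _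
    set d : ℝ := s * Real.sqrt qw with hddef
    have hd_nn : 0 ≤ d := mul_nonneg hs_nonneg (Real.sqrt_nonneg _)
    have ht1 : s / γ ^ 2 < 1 := (div_lt_one (by positivity)).mpr hsγ
    obtain ⟨N, hN⟩ := exists_pow_lt_of_lt_one
      (show (0:ℝ) < γ ^ 2 / (d + 1) by positivity) ht1
    -- the residual bound
    have hres : ∀ i, ((γ ^ 2)⁻¹) ^ N * ((A ^ (N + 1) *ᵥ w) i) < γ ^ 2 := by
      intro i
      have hb : ((A ^ (N+1) *ᵥ w) i) ^ 2 ≤ (s ^ 2) ^ (N+1) * qw :=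
        le_trans (Finset.single_le_sum
          (fun j (_ : j ∈ Finset.univ) => sq_nonneg ((A ^ (N+1) *ᵥ w) j))
          (Finset.mem_univ i)) (hiter (N+1))
      have hr : (A ^ (N+1) *ᵥ w) i ≤ s ^ (N+1) * Real.sqrt qw := by
        have h1 : (A ^ (N+1) *ᵥ w) i ≤ Real.sqrt (((A ^ (N+1) *ᵥ w) i) ^ 2) := by
          rw [Real.sqrt_sq_eq_abs]; exact le_abs_self _
        refine h1.trans ?_
        have h2 : Real.sqrt (((A ^ (N+1) *ᵥ w) i) ^ 2)
            ≤ Real.sqrt ((s ^ 2) ^ (N+1) * qw) := Real.sqrt_le_sqrt hb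
        refine h2.trans_eq ?_
        rw [show ((s:ℝ) ^ 2) ^ (N+1) = (s ^ (N+1)) ^ 2 by ring,
          Real.sqrt_mul (sq_nonneg _), Real.sqrt_sq (pow_nonneg hs_nonneg _)]
      have hcpos : (0:ℝ) < ((γ ^ 2)⁻¹) ^ N := by positivity
      calc ((γ ^ 2)⁻¹) ^ N * ((A ^ (N + 1) *ᵥ w) i)
          ≤ ((γ ^ 2)⁻¹) ^ N * (s ^ (N+1) * Real.sqrt qw) :=
            mul_le_mul_of_nonneg_left hr hcpos.le
        _ = (s / γ ^ 2) ^ N * d := by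
            rw [hddef]; field_simp; ring
        _ ≤ (γ ^ 2 / (d + 1)) * d := mul_le_mul_of_nonneg_right hN.le hd_nn
        _ < γ ^ 2 := by
            have hd1 : (0:ℝ) < d + 1 := by linarith
            rw [div_mul_eq_mul_div, div_lt_iff₀ hd1]
            nlinarith
    -- the certificate
    set u : Fin n → ℝ :=
      fun i => ∑ k ∈ Finset.range (N+1), ((γ ^ 2)⁻¹) ^ k * ((A ^ k *ᵥ w) i) with hudef
    have hu_apply : ∀ i, u i = ∑ k ∈ Finset.range (N+1),
        ((γ ^ 2)⁻¹) ^ k * ((A ^ k *ᵥ w) i) := fun i => by rw [hudef]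
    have hterm_nn : ∀ (k : ℕ) i, 0 ≤ ((γ ^ 2)⁻¹) ^ k * ((A ^ k *ᵥ w) i) := by
      intro k i
      exact mul_nonneg (by positivity)
        (hmulVec_nn _ _ (hAk k) (fun j => (hw_pos j).le) i)
    have hu_ge : ∀ i, w i ≤ u i := by
      intro i
      have h0 : ((γ ^ 2)⁻¹) ^ 0 * ((A ^ 0 *ᵥ w) i) = w i := by
        simp [Matrix.one_mulVec]
      rw [hu_apply i, ← h0]
      exact Finset.single_le_sum (fun k _ => hterm_nn k i)
        (Finset.mem_range.mpr (Nat.succ_pos N))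
    have hu_pos : ∀ i, 0 < u i := fun i => lt_of_lt_of_le (hw_pos i) (hu_ge i)
    have hu_nn : ∀ i, 0 ≤ u i := fun i => (hu_pos i).le
    set v : Fin n → ℝ := fun i => γ⁻¹ * ((M *ᵥ u) i) + 1 with hvdef
    have hMu_nn : ∀ i, 0 ≤ (M *ᵥ u) i := fun i => hmulVec_nn M u hM hu_nn i
    have hv_pos : ∀ i, 0 < v i := by
      intro i
      have hvi : v i = γ⁻¹ * (M *ᵥ u) i + 1 := by rw [hvdef]
      rw [hvi]
      linarith [mul_nonneg (inv_pos.mpr hγ).le (hMu_nn i)]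
    -- the key telescoping identity
    have hAu : ∀ i, (A *ᵥ u) i = γ ^ 2 * (u i - w i)
        + ((γ ^ 2)⁻¹) ^ N * ((A ^ (N + 1) *ᵥ w) i) := by
      intro i
      have h0 : (A *ᵥ u) i = ∑ k ∈ Finset.range (N+1),
          ((γ ^ 2)⁻¹) ^ k * ((A ^ (k+1) *ᵥ w) i) := by
        have h1 : (A *ᵥ u) i = ∑ j, A i j * u j := rfl
        rw [h1]
        calc ∑ j, A i j * u j
            = ∑ j, ∑ k ∈ Finset.range (N+1),
                ((γ ^ 2)⁻¹) ^ k * (A i j * ((A ^ k *ᵥ w) j)) := by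
              refine Finset.sum_congr rfl fun j _ => ?_
              rw [hu_apply j, Finset.mul_sum]
              exact Finset.sum_congr rfl fun k _ => by ring
          _ = ∑ k ∈ Finset.range (N+1), ((γ ^ 2)⁻¹) ^ k * ((A ^ (k+1) *ᵥ w) i) := by
              rw [Finset.sum_comm]
              refine Finset.sum_congr rfl fun k _ => ?_
              have hk : (A ^ (k+1) *ᵥ w) i = ∑ j, A i j * ((A ^ k *ᵥ w) j) := by
                rw [show A ^ (k+1) *ᵥ w = A *ᵥ (A ^ k *ᵥ w) from by
                  rw [Matrix.mulVec_mulVec, ← pow_succ']]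
                rfl
              rw [hk, Finset.mul_sum]
      have hciv : ∀ k : ℕ, γ ^ 2 * ((γ ^ 2)⁻¹) ^ (k+1) = ((γ ^ 2)⁻¹) ^ k := by
        intro k
        rw [pow_succ ((γ ^ 2)⁻¹) k, mul_comm, mul_assoc, inv_mul_cancel₀ (by positivity), mul_one]
      have huw : u i - w i = ∑ k ∈ Finset.range N,
          ((γ ^ 2)⁻¹) ^ (k+1) * ((A ^ (k+1) *ᵥ w) i) := by
        rw [hu_apply i, Finset.sum_range_succ']
        simp [Matrix.one_mulVec]
      rw [h0, Finset.sum_range_succ, huw, Finset.mul_sum]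
      congr 1
      refine Finset.sum_congr rfl fun k _ => ?_
      rw [← mul_assoc, hciv k]
    refine ⟨u, v, hu_pos, hv_pos, ?_, ?_⟩
    · intro i
      have h1 : γ * v i = (M *ᵥ u) i + γ := by
        rw [hvdef]
        field_simp
      rw [h1]
      linarith
    · intro i
      have hMTv : (Mᵀ *ᵥ v) i = γ⁻¹ * ((A *ᵥ u) i) + (Mᵀ *ᵥ one) i := by
        have h1 : (A : Matrix (Fin n) (Fin n) ℝ) *ᵥ u = Mᵀ *ᵥ (M *ᵥ u) := by
          rw [Matrix.mulVec_mulVec]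
        rw [h1]
        have h2 : (Mᵀ *ᵥ v) i = ∑ j, Mᵀ i j * v j := rfl
        have h3 : (Mᵀ *ᵥ (M *ᵥ u)) i = ∑ j, Mᵀ i j * ((M *ᵥ u) j) := rfl
        have h4 : (Mᵀ *ᵥ one) i = ∑ j, Mᵀ i j * one j := rfl
        rw [h2, h3, h4, Finset.mul_sum, ← Finset.sum_add_distrib]
        refine Finset.sum_congr rfl fun j _ => ?_
        have h5 : v j = γ⁻¹ * ((M *ᵥ u) j) + 1 := by rw [hvdef]
        have h6 : one j = 1 := rfl
        rw [h5, h6]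
        ring
      have hwi : w i = γ⁻¹ * ((Mᵀ *ᵥ one) i) + 1 := by rw [hwdef]
      have hkey : γ⁻¹ * (γ ^ 2 * (u i - w i)
            + ((γ ^ 2)⁻¹) ^ N * ((A ^ (N + 1) *ᵥ w) i)) + (Mᵀ *ᵥ one) i
          = γ * u i - γ + γ⁻¹ * (((γ ^ 2)⁻¹) ^ N * ((A ^ (N + 1) *ᵥ w) i)) := by
        rw [hwi]
        field_simp
        ring
      rw [hMTv, hAu i, hkey]
      have h7 : γ⁻¹ * (((γ ^ 2)⁻¹) ^ N * ((A ^ (N + 1) *ᵥ w) i)) < γ⁻¹ * γ ^ 2 :=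
        mul_lt_mul_of_pos_left (hres i) (inv_pos.mpr hγ)
      have h8 : γ⁻¹ * γ ^ 2 = γ := by
        field_simp
      linarith [h7, h8 ▸ h7]
  · -- backward: certificate implies s < γ²
    intro ⟨u, v, hu, hv, huv, hvu⟩
    set α : ℝ := Finset.univ.sup' hne (fun i => (M *ᵥ u) i / v i) with hα
    set β : ℝ := Finset.univ.sup' hne (fun i => (Mᵀ *ᵥ v) i / u i) with hβ
    have hMu_nn : ∀ i, 0 ≤ (M *ᵥ u) i := by
      intro i
      rw [Matrix.mulVec, dotProduct]
      exact Finset.sum_nonneg fun j _ => mul_nonneg (hM i j) (hu j).le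
    have hMv_nn : ∀ i, 0 ≤ (Mᵀ *ᵥ v) i := by
      intro i
      rw [Matrix.mulVec, dotProduct]
      exact Finset.sum_nonneg fun j _ => mul_nonneg (hM j i) (hv j).le
    have hα_lt : α < γ := by
      rw [hα, Finset.sup'_lt_iff]
      exact fun i _ => (div_lt_iff₀ (hv i)).mpr (huv i)
    have hβ_lt : β < γ := by
      rw [hβ, Finset.sup'_lt_iff]
      exact fun i _ => (div_lt_iff₀ (hu i)).mpr (hvu i)
    have hα_nonneg : 0 ≤ α :=
      le_trans (div_nonneg (hMu_nn i0) (hv i0).le)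
        (Finset.le_sup' (fun i => (M *ᵥ u) i / v i) (Finset.mem_univ i0))
    have hβ_nonneg : 0 ≤ β :=
      le_trans (div_nonneg (hMv_nn i0) (hu i0).le)
        (Finset.le_sup' (fun i => (Mᵀ *ᵥ v) i / u i) (Finset.mem_univ i0))
    have hα_le : ∀ i, (M *ᵥ u) i ≤ α * v i := by
      intro i
      have := Finset.le_sup' (fun i => (M *ᵥ u) i / v i) (Finset.mem_univ i)
      calc (M *ᵥ u) i = ((M *ᵥ u) i / v i) * v i := (div_mul_cancel₀ _ (hv i).ne').symm
        _ ≤ α * v i := mul_le_mul_of_nonneg_right this (hv i).le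
    have hβ_le : ∀ i, (Mᵀ *ᵥ v) i ≤ β * u i := by
      intro i
      have := Finset.le_sup' (fun i => (Mᵀ *ᵥ v) i / u i) (Finset.mem_univ i)
      calc (Mᵀ *ᵥ v) i = ((Mᵀ *ᵥ v) i / u i) * u i := (div_mul_cancel₀ _ (hu i).ne').symm
        _ ≤ β * u i := mul_le_mul_of_nonneg_right this (hu i).le
    -- Schur-type bound
    have hschur : ∀ x : Fin n → ℝ, ∑ i, ((M *ᵥ x) i) ^ 2 ≤ (α * β) * ∑ i, x i ^ 2 := by
      intro x
      have step1 : ∀ i, ((M *ᵥ x) i) ^ 2 ≤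
          (α * v i) * (∑ j, M i j * (x j ^ 2 / u j)) := by
        intro i
        have hcs : ((M *ᵥ x) i) ^ 2 ≤
            (∑ j, M i j * u j) * (∑ j, M i j * (x j ^ 2 / u j)) := by
          have : (M *ᵥ x) i = ∑ j, M i j * x j := rfl
          rw [this]
          refine Finset.sum_sq_le_sum_mul_sum_of_sq_eq_mul Finset.univ
            (fun j _ => mul_nonneg (hM i j) (hu j).le)
            (fun j _ => mul_nonneg (hM i j) (div_nonneg (sq_nonneg _) (hu j).le))
            (fun j _ => ?_)
          have huj : u j ≠ 0 := (hu j).ne'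
          field_simp
        refine hcs.trans (mul_le_mul_of_nonneg_right ?_ ?_)
        · have : (∑ j, M i j * u j) = (M *ᵥ u) i := rfl
          rw [this]; exact hα_le i
        · exact Finset.sum_nonneg fun j _ =>
            mul_nonneg (hM i j) (div_nonneg (sq_nonneg _) (hu j).le)
      calc ∑ i, ((M *ᵥ x) i) ^ 2
          ≤ ∑ i, (α * v i) * (∑ j, M i j * (x j ^ 2 / u j)) :=
            Finset.sum_le_sum fun i _ => step1 i
        _ = ∑ i, ∑ j, α * ((x j ^ 2 / u j) * (M i j * v i)) := by
            refine Finset.sum_congr rfl fun i _ => ?_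
            rw [Finset.mul_sum]
            exact Finset.sum_congr rfl fun j _ => by ring
        _ = α * ∑ j, (x j ^ 2 / u j) * (Mᵀ *ᵥ v) j := by
            have hMTv : ∀ j, (Mᵀ *ᵥ v) j = ∑ i, M i j * v i := fun j => by
              simp [Matrix.mulVec, dotProduct]
            rw [Finset.sum_comm, Finset.mul_sum]
            refine Finset.sum_congr rfl fun j _ => ?_
            rw [hMTv j, Finset.mul_sum, Finset.mul_sum]
        _ ≤ α * ∑ j, (x j ^ 2 / u j) * (β * u j) := by
            refine mul_le_mul_of_nonneg_left (Finset.sum_le_sum fun j _ => ?_) hα_nonneg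
            exact mul_le_mul_of_nonneg_left (hβ_le j)
              (div_nonneg (sq_nonneg _) (hu j).le)
        _ = (α * β) * ∑ j, x j ^ 2 := by
            rw [Finset.mul_sum, Finset.mul_sum]
            refine Finset.sum_congr rfl fun j _ => ?_
            have huj : u j ≠ 0 := (hu j).ne'
            field_simp
    -- conclude
    have : s < γ ^ 2 := by
      obtain ⟨i0, hi0⟩ := hs_mem
      have hmem : s ∈ spectrum ℝ A := hi0 ▸ hA.eigenvalues_mem_spectrum_real i0
      obtain ⟨x, hx, hx0⟩ := sigma_aux_spectrum_eigenvector A s hmem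
      have hxq : x ⬝ᵥ (A *ᵥ x) = s * ∑ i, x i ^ 2 := by
        rw [hx0]
        simp [dotProduct, sq, Finset.mul_sum]
        exact Finset.sum_congr rfl fun j _ => by ring
      have hq2 : x ⬝ᵥ (A *ᵥ x) = ∑ i, ((M *ᵥ x) i) ^ 2 := sigma_aux_quad M x
      have hsch := hschur x
      have hpos := sigma_aux_dot_pos x hx
      have h1 : s * ∑ i, x i ^ 2 ≤ (α * β) * ∑ i, x i ^ 2 := by
        rw [← hxq, hq2]; exact hsch
      have h2 : s ≤ α * β := le_of_mul_le_mul_right h1 hpos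
      nlinarith [hα_lt, hβ_lt, hα_nonneg, hβ_nonneg, h2, hγ]
    exact this
end

section
/- Let M be an n×n Metzler matrix (all off-diagonal entries nonnegative) and γ a real number. Then the maximum real eigenvalue λ_max(M) satisfies λ_max(M) < γ if and only if there exists an entrywise positive vector v ∈ ℝⁿ such that M v < γ v entrywise. -/
/-- A real square matrix is Metzler if all its off-diagonal entries are nonnegative. -/
def Metzler {n : ℕ} (M : Matrix (Fin n) (Fin n) ℝ) : Prop :=
  ∀ i j, i ≠ j → 0 ≤ M i j

/-- The maximum real eigenvalue of a real square matrix (for a Metzler matrix of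
positive order this is the dominant Perron–Frobenius eigenvalue). -/
noncomputable def lambdaMax {n : ℕ} (M : Matrix (Fin n) (Fin n) ℝ) : ℝ :=
  sSup (spectrum ℝ M)

lemma metzler_eig_lt {n : ℕ} {M : Matrix (Fin n) (Fin n) ℝ} (hM : Metzler M)
    {t : ℝ} {u : Fin n → ℝ} (hu : ∀ i, 0 < u i) (hMu : ∀ i, M.mulVec u i < t * u i)
    {l : ℝ} {x : Fin n → ℝ} (hx : x ≠ 0) (heig : M.mulVec x = l • x) : l < t := by
  obtain ⟨j0, hj0⟩ := Function.ne_iff.mp hx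
  obtain ⟨i, -, hi⟩ := Finset.exists_max_image Finset.univ (fun j => |x j| / u j)
    ⟨j0, Finset.mem_univ j0⟩
  set c : ℝ := |x i| / u i with hc
  have hcpos : 0 < c :=
    lt_of_lt_of_le (div_pos (abs_pos.mpr hj0) (hu j0)) (hi j0 (Finset.mem_univ j0))
  have hle : ∀ j, |x j| ≤ c * u j := by
    intro j
    have := (div_le_iff₀ (hu j)).mp (hi j (Finset.mem_univ j))
    linarith [this]
  have hxi : |x i| = c * u i := by
    rw [hc, div_mul_cancel₀ _ (hu i).ne']
  set σ : ℝ := |M i i| with hσ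
  set g : Fin n → ℝ := fun j => M i j + if j = i then σ else 0 with hg
  have hgnn : ∀ j, 0 ≤ g j := by
    intro j
    by_cases h : j = i
    · subst h
      have h2 : 0 ≤ M j j + σ := by rw [hσ]; linarith [neg_abs_le (M j j)]
      simpa [hg] using h2
    · simp [hg, h, hM i j (fun hh => h hh.symm)]
  have hmv : ∀ z : Fin n → ℝ, M.mulVec z i = ∑ j, M i j * z j := by
    intro z; simp [Matrix.mulVec, dotProduct]
  have e1 : ∀ z : Fin n → ℝ, ∑ j, g j * z j = (∑ j, M i j * z j) + σ * z i := by
    intro z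
    simp only [hg, add_mul, Finset.sum_add_distrib, ite_mul, zero_mul,
      Finset.sum_ite_eq', Finset.mem_univ, if_true]
  have hsum : (l + σ) * x i = ∑ j, g j * x j := by
    rw [e1 x, ← hmv x, heig]
    simp only [Pi.smul_apply, smul_eq_mul]; ring
  have key : |(l + σ) * x i| ≤ ∑ j, g j * (c * u j) := by
    rw [hsum]
    refine (Finset.abs_sum_le_sum_abs _ _).trans (Finset.sum_le_sum fun j _ => ?_)
    rw [abs_mul, abs_of_nonneg (hgnn j)]
    exact mul_le_mul_of_nonneg_left (hle j) (hgnn j)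
  have hsum2 : ∑ j, g j * (c * u j) = c * (M.mulVec u i + σ * u i) := by
    rw [e1 (fun j => c * u j), hmv u, mul_add, Finset.mul_sum]
    congr 1
    · exact Finset.sum_congr rfl fun j _ => by ring
    · ring
  have hlt : c * (M.mulVec u i + σ * u i) < (t + σ) * |x i| := by
    rw [hxi]
    have := hMu i
    nlinarith [hu i]
  have habs : |l + σ| < t + σ := by
    have h1 : |l + σ| * |x i| < (t + σ) * |x i| := by
      rw [← abs_mul]; exact key.trans_lt (hsum2 ▸ hlt)
    have hxipos : 0 < |x i| := by rw [hxi]; exact mul_pos hcpos (hu i)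
    exact (mul_lt_mul_iff_left₀ hxipos).mp h1
  linarith [le_abs_self (l + σ)]

lemma metzler_sol_nonneg {n : ℕ} {M : Matrix (Fin n) (Fin n) ℝ} (hM : Metzler M)
    {t : ℝ} {u : Fin n → ℝ} (hu : ∀ i, 0 < u i) (hMu : ∀ i, M.mulVec u i < t * u i)
    {z y : Fin n → ℝ} (hy : ∀ i, 0 ≤ y i)
    (hz : ∀ i, t * z i - M.mulVec z i = y i) : ∀ j, 0 ≤ z j := by
  by_contra hcon
  push_neg at hcon
  obtain ⟨j0, hj0⟩ := hcon
  obtain ⟨i, -, hi⟩ := Finset.exists_min_image Finset.univ (fun j => z j / u j)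
    ⟨j0, Finset.mem_univ j0⟩
  set m : ℝ := z i / u i with hm
  have hmneg : m < 0 :=
    lt_of_le_of_lt (hi j0 (Finset.mem_univ j0)) (div_neg_of_neg_of_pos hj0 (hu j0))
  have hzk : ∀ k, m * u k ≤ z k := by
    intro k
    have := (le_div_iff₀ (hu k)).mp (hi k (Finset.mem_univ k))
    linarith
  have hzi : z i = m * u i := by
    rw [hm, div_mul_cancel₀ _ (hu i).ne']
  have hmv : ∀ w : Fin n → ℝ, M.mulVec w i = ∑ k, M i k * w k := by
    intro w; simp [Matrix.mulVec, dotProduct]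
  have hsum_ge : ∑ k, M i k * (m * u k) ≤ ∑ k, M i k * z k := by
    refine Finset.sum_le_sum fun k _ => ?_
    by_cases h : k = i
    · subst h; rw [hzi]
    · exact mul_le_mul_of_nonneg_left (hzk k) (hM i k (fun hh => h hh.symm))
  have hfac : ∑ k, M i k * (m * u k) = m * M.mulVec u i := by
    rw [hmv u, Finset.mul_sum]
    exact Finset.sum_congr rfl fun k _ => by ring
  have hyi : y i ≤ m * (t * u i - M.mulVec u i) := by
    rw [← hz i, hmv z, hzi]
    calc t * (m * u i) - ∑ k, M i k * z k
        ≤ t * (m * u i) - ∑ k, M i k * (m * u k) := by linarith [hsum_ge]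
      _ = m * (t * u i - M.mulVec u i) := by rw [hfac]; ring
  have : m * (t * u i - M.mulVec u i) < 0 :=
    mul_neg_of_neg_of_pos hmneg (by linarith [hMu i])
  linarith [hy i]

theorem metzler_lambdaMax_lt_iff (n : ℕ) (hn : 0 < n)
    (M : Matrix (Fin n) (Fin n) ℝ) (hM : Metzler M) (γ : ℝ) :
    lambdaMax M < γ ↔
      ∃ v : Fin n → ℝ, (∀ i, 0 < v i) ∧ ∀ i, M.mulVec v i < γ * v i := by
  haveI : Nonempty (Fin n) := ⟨⟨0, hn⟩⟩
  set P : Set ℝ := {t | ∃ u : Fin n → ℝ, (∀ i, 0 < u i) ∧ ∀ i, M.mulVec u i < t * u i} with hP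
  have hup : ∀ {t t' : ℝ}, t ∈ P → t ≤ t' → t' ∈ P := by
    rintro t t' ⟨u, hu, hMu⟩ htt
    exact ⟨u, hu, fun i => (hMu i).trans_le (mul_le_mul_of_nonneg_right htt (hu i).le)⟩
  have hPne : P.Nonempty := by
    refine ⟨1 + ∑ i, ∑ j, |M i j|, fun _ => 1, fun _ => one_pos, fun i => ?_⟩
    have h1 : M.mulVec (fun _ => 1) i = ∑ j, M i j := by
      simp [Matrix.mulVec, dotProduct]
    have h2 : ∑ j, M i j ≤ ∑ j, |M i j| := Finset.sum_le_sum fun j _ => le_abs_self _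
    have h3 : ∑ j, |M i j| ≤ ∑ i', ∑ j, |M i' j| :=
      Finset.single_le_sum (f := fun i' => ∑ j, |M i' j|)
        (fun i' _ => Finset.sum_nonneg fun j _ => abs_nonneg _) (Finset.mem_univ i)
    rw [h1]; simp only [mul_one]; linarith
  have hbdd : BddBelow P := by
    refine ⟨M ⟨0, hn⟩ ⟨0, hn⟩, ?_⟩
    rintro t ⟨u, hu, hMu⟩
    set i0 : Fin n := ⟨0, hn⟩
    have hmv : M.mulVec u i0 = ∑ j, M i0 j * u j := by
      simp [Matrix.mulVec, dotProduct]
    have herase := Finset.sum_erase_add Finset.univ (fun j => M i0 j * u j) (Finset.mem_univ i0)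
    have hnn : 0 ≤ ∑ j ∈ Finset.univ.erase i0, M i0 j * u j :=
      Finset.sum_nonneg fun j hj =>
        mul_nonneg (hM i0 j (Ne.symm (Finset.mem_erase.mp hj).1)) (hu j).le
    have h1 : M i0 i0 * u i0 ≤ M.mulVec u i0 := by rw [hmv, ← herase]; beta_reduce; linarith
    have h2 : M i0 i0 * u i0 < t * u i0 := lt_of_le_of_lt h1 (hMu i0)
    exact ((mul_lt_mul_iff_left₀ (hu i0)).mp h2).le
  set c : ℝ := sInf P with hc
  have hcnot : c ∉ P := by
    rintro ⟨u, hu, hMu⟩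
    set ε : ℝ := Finset.univ.inf' Finset.univ_nonempty
      (fun i => (c * u i - M.mulVec u i) / u i) with hε
    have hεpos : 0 < ε := by
      rw [hε, Finset.lt_inf'_iff]
      exact fun i _ => div_pos (by linarith [hMu i]) (hu i)
    have hmem : c - ε / 2 ∈ P := by
      refine ⟨u, hu, fun i => ?_⟩
      have h1 : ε ≤ (c * u i - M.mulVec u i) / u i :=
        Finset.inf'_le _ (Finset.mem_univ i)
      have h2 : ε * u i ≤ c * u i - M.mulVec u i := (le_div_iff₀ (hu i)).mp h1
      nlinarith [hu i]
    have h3 := csInf_le hbdd hmem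
    rw [← hc] at h3
    linarith
  have hIoi : ∀ t : ℝ, c < t → t ∈ P := by
    intro t ht
    rw [hc] at ht
    obtain ⟨p, hp, hpt⟩ := exists_lt_of_csInf_lt hPne ht
    exact hup hp hpt.le
  have hspec_ev : ∀ l : ℝ, l ∈ spectrum ℝ M →
      ∃ x : Fin n → ℝ, x ≠ 0 ∧ M.mulVec x = l • x := by
    intro l hl
    rw [spectrum.mem_iff] at hl
    have hdet : (algebraMap ℝ (Matrix (Fin n) (Fin n) ℝ) l - M).det = 0 := by
      by_contra h
      exact hl ((Matrix.isUnit_iff_isUnit_det _).mpr (isUnit_iff_ne_zero.mpr h))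
    obtain ⟨v, hv0, hv⟩ := Matrix.exists_mulVec_eq_zero_iff.mpr hdet
    refine ⟨v, hv0, ?_⟩
    rw [Matrix.sub_mulVec, Algebra.algebraMap_eq_smul_one, Matrix.smul_mulVec,
      Matrix.one_mulVec] at hv
    exact (sub_eq_zero.mp hv).symm
  have hub : ∀ l ∈ spectrum ℝ M, l ≤ c := by
    intro l hl
    by_contra h
    push_neg at h
    obtain ⟨u, hu, hMu⟩ := hIoi l h
    obtain ⟨x, hx0, hx⟩ := hspec_ev l hl
    exact absurd (metzler_eig_lt hM hu hMu hx0 hx) (lt_irrefl l)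
  have hcspec : c ∈ spectrum ℝ M := by
    by_contra hcs
    rw [spectrum.mem_iff, not_not] at hcs
    set B : ℝ → Matrix (Fin n) (Fin n) ℝ :=
      fun t => t • (1 : Matrix (Fin n) (Fin n) ℝ) - M with hB
    have halg : ∀ t : ℝ, algebraMap ℝ (Matrix (Fin n) (Fin n) ℝ) t - M = B t := by
      intro t; rw [hB, Algebra.algebraMap_eq_smul_one]
    have hdetc : (B c).det ≠ 0 := by
      rw [← halg]
      exact isUnit_iff_ne_zero.mp ((Matrix.isUnit_iff_isUnit_det _).mp hcs)
    have hBmv : ∀ (t : ℝ) (z : Fin n → ℝ) (i : Fin n),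
        (B t).mulVec z i = t * z i - M.mulVec z i := by
      intro t z i
      rw [hB]
      simp [Matrix.sub_mulVec, Matrix.smul_mulVec, Matrix.one_mulVec]
    have hdetP : ∀ t ∈ P, (B t).det ≠ 0 := by
      intro t ht h0
      obtain ⟨v, hv0, hv⟩ := Matrix.exists_mulVec_eq_zero_iff.mpr h0
      have hveig : M.mulVec v = t • v := by
        funext i
        have := congrFun hv i
        rw [hBmv t v i] at this
        have h2 : M.mulVec v i = t * v i := by
          have h3 : (0 : Fin n → ℝ) i = 0 := rfl
          rw [h3] at this; linarith
        simpa using h2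
      obtain ⟨u, hu, hMu⟩ := ht
      exact absurd (metzler_eig_lt hM hu hMu hv0 hveig) (lt_irrefl t)
    set w : ℝ → Fin n → ℝ :=
      fun t i => ((B t).det)⁻¹ * ∑ j, (B t).adjugate i j with hw
    have hwinv : ∀ t : ℝ, (B t).det ≠ 0 → ∀ i, t * w t i - M.mulVec (w t) i = 1 := by
      intro t hdet
      have hwe : w t = (B t)⁻¹.mulVec (fun _ => 1) := by
        funext i'
        rw [hw]
        simp only [Matrix.inv_def, Ring.inverse_eq_inv']
        simp [Matrix.mulVec, dotProduct, Matrix.smul_apply, smul_eq_mul,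
          Finset.mul_sum]
      have h1 : (B t).mulVec (w t) = fun _ => 1 := by
        rw [hwe, Matrix.mulVec_mulVec,
          Matrix.mul_nonsing_inv _ (isUnit_iff_ne_zero.mpr hdet), Matrix.one_mulVec]
      intro i
      have h2 := congrFun h1 i
      rw [hBmv t (w t) i] at h2
      exact h2
    have hBcont : Continuous B := by
      rw [hB]
      exact (continuous_id.smul continuous_const).sub continuous_const
    have hwcont : ∀ i, ContinuousAt (fun t => w t i) c := by
      intro i
      refine ContinuousAt.mul ?_ ?_
      · exact (hBcont.matrix_det.continuousAt).inv₀ hdetc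
      · exact (continuous_finset_sum Finset.univ
          (fun j _ => hBcont.matrix_adjugate.matrix_elem i j)).continuousAt
    have hwc_nonneg : ∀ i, 0 ≤ w c i := by
      intro i
      have hseq : Filter.Tendsto (fun k : ℕ => c + 1 / (k + 1)) Filter.atTop (nhds c) := by
        have h0 := tendsto_one_div_add_atTop_nhds_zero_nat (𝕜 := ℝ)
        have := Filter.Tendsto.const_add c h0
        simpa using this
      have hten : Filter.Tendsto (fun k : ℕ => w (c + 1 / (k + 1)) i)
          Filter.atTop (nhds (w c i)) := (hwcont i).tendsto.comp hseq
      refine ge_of_tendsto hten (Filter.Eventually.of_forall fun k => ?_)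
      have hklt : c < c + 1 / (k + 1 : ℝ) := by
        have : (0 : ℝ) < 1 / (k + 1 : ℝ) := by positivity
        linarith
      have hkP : c + 1 / (k + 1 : ℝ) ∈ P := hIoi _ hklt
      obtain ⟨u, hu, hMu⟩ := hkP
      exact metzler_sol_nonneg hM hu hMu (fun _ => zero_le_one)
        (hwinv _ (hdetP _ (hIoi _ hklt))) i
    have hwinvc := hwinv c hdetc
    have hwpos : ∀ i, 0 < w c i := by
      intro i
      rcases lt_or_eq_of_le (hwc_nonneg i) with h | h
      · exact h
      · exfalso
        have h1 := hwinvc i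
        have hnn : 0 ≤ M.mulVec (w c) i := by
          have hmv : M.mulVec (w c) i = ∑ j, M i j * w c j := by
            simp [Matrix.mulVec, dotProduct]
          rw [hmv]
          refine Finset.sum_nonneg fun j _ => ?_
          by_cases hji : j = i
          · rw [hji, ← h, mul_zero]
          · exact mul_nonneg (hM i j fun hh => hji hh.symm) (hwc_nonneg j)
        rw [← h] at h1
        rw [mul_zero] at h1
        linarith
    have hcP : c ∈ P := ⟨w c, hwpos, fun i => by have := hwinvc i; linarith⟩
    exact hcnot hcP
  have hgreat : IsGreatest (spectrum ℝ M) c := ⟨hcspec, hub⟩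
  have hlam : lambdaMax M = c := hgreat.csSup_eq
  rw [hlam]
  constructor
  · intro h
    exact hIoi γ h
  · intro hv
    have hγP : γ ∈ P := hv
    have h1 : c ≤ γ := by rw [hc]; exact csInf_le hbdd hγP
    rcases h1.lt_or_eq with h | h
    · exact h
    · exact absurd (h ▸ hγP) hcnot
end

section
/- Let F ∈ ℝ^{n×n} be a Metzler matrix, g ∈ ℝⁿ and H ∈ ℝ^{m×n} be entrywise nonnegative, and v ∈ ℝ^m. Then F is Hurwitz stable and −H F⁻¹ g < v (entrywise) if and only if there exists an entrywise positive vector ω ∈ ℝⁿ such that H ω < v and F ω + g < 0 (entrywise). -/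
/-- A real square matrix is Hurwitz stable if all its (complex) eigenvalues have
negative real parts. -/
def Hurwitz {n : ℕ} (M : Matrix (Fin n) (Fin n) ℝ) : Prop :=
  ∀ μ ∈ spectrum ℂ (M.map (Complex.ofReal ·)), μ.re < 0

open Matrix Finset

def PosNeg {n : ℕ} (F : Matrix (Fin n) (Fin n) ℝ) : Prop :=
  ∃ ω : Fin n → ℝ, (∀ i, 0 < ω i) ∧ ∀ i, F.mulVec ω i < 0


theorem mono_lemma {n : ℕ} {F : Matrix (Fin n) (Fin n) ℝ} (hF : Metzler F)
    {ω : Fin n → ℝ} (hω : ∀ i, 0 < ω i) (hFω : ∀ i, F.mulVec ω i < 0)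
    (x : Fin n → ℝ) (hx : ∀ i, F.mulVec x i ≤ 0) : ∀ i, 0 ≤ x i := by
  by_contra h
  push_neg at h
  obtain ⟨k, hk⟩ := h
  obtain ⟨i, -, hi⟩ := Finset.exists_max_image Finset.univ (fun i => -x i / ω i)
    ⟨k, Finset.mem_univ k⟩
  set t := -x i / ω i with ht
  have htpos : 0 < t := lt_of_lt_of_le (div_pos (neg_pos.2 hk) (hω k)) (hi k (Finset.mem_univ k))
  set y : Fin n → ℝ := fun j => x j + t * ω j with hy
  have hynn : ∀ j, 0 ≤ y j := by
    intro j
    have := hi j (Finset.mem_univ j)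
    rw [div_le_iff₀ (hω j)] at this
    simp only [hy]
    linarith
  have hyi : y i = 0 := by
    have : t * ω i = -x i := div_mul_cancel₀ _ (hω i).ne'
    simp only [hy]
    linarith
  have h1 : F.mulVec y i < 0 := by
    have : F.mulVec y = F.mulVec x + t • F.mulVec ω := by
      rw [show y = x + t • ω from rfl, Matrix.mulVec_add, Matrix.mulVec_smul]
    rw [this]
    have := hFω i
    have := hx i
    simp only [Pi.add_apply, Pi.smul_apply, smul_eq_mul]
    nlinarith
  have h2 : 0 ≤ F.mulVec y i := by
    rw [Matrix.mulVec, dotProduct]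
    apply Finset.sum_nonneg
    intro j _
    by_cases hji : j = i
    · subst hji; rw [hyi, mul_zero]
    · exact mul_nonneg (hF i j (Ne.symm hji)) (hynn j)
  linarith

theorem det_ne_zero {n : ℕ} {F : Matrix (Fin n) (Fin n) ℝ} (hF : Metzler F)
    (hP : PosNeg F) : F.det ≠ 0 := by
  obtain ⟨ω, hω, hFω⟩ := hP
  intro h
  obtain ⟨v, hv, hFv⟩ := Matrix.exists_mulVec_eq_zero_iff.mpr h
  have h1 := mono_lemma hF hω hFω v (fun i => by rw [hFv]; exact le_refl 0)
  have h2 := mono_lemma hF hω hFω (-v) (fun i => by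
    rw [Matrix.mulVec_neg, hFv]; simp)
  apply hv
  funext i
  have := h2 i
  simp only [Pi.neg_apply] at this
  have := h1 i
  simp only [Pi.zero_apply]
  linarith

theorem Finv_nonpos {n : ℕ} {F : Matrix (Fin n) (Fin n) ℝ} (hF : Metzler F)
    (hP : PosNeg F) : ∀ i j, F⁻¹ i j ≤ 0 := by
  obtain ⟨ω, hω, hFω⟩ := hP
  have hdet : IsUnit F.det := (det_ne_zero hF ⟨ω, hω, hFω⟩).isUnit
  intro i j
  have key : ∀ i', 0 ≤ -(F⁻¹ i' j) := by
    apply mono_lemma hF hω hFω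
    intro i'
    have : (fun i' => -(F⁻¹ i' j)) = F⁻¹.mulVec (-(Pi.single j 1)) := by
      rw [Matrix.mulVec_neg, Matrix.mulVec_single]
      funext k; simp
    rw [this, Matrix.mulVec_mulVec, Matrix.mul_nonsing_inv F hdet]
    rw [Matrix.mulVec_neg, Matrix.one_mulVec]
    by_cases hij : i' = j <;> simp [Pi.single_apply, hij]
  have := key i
  linarith

theorem exists_omega {n : ℕ} {F : Matrix (Fin n) (Fin n) ℝ} (hdet : F.det ≠ 0)
    (hinv : ∀ i j, F⁻¹ i j ≤ 0) : PosNeg F := by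
  refine ⟨fun i => ∑ j, -(F⁻¹ i j), ?_, ?_⟩
  · intro i
    apply Finset.sum_pos'
    · intro j _; linarith [hinv i j]
    · by_contra h
      push_neg at h
      have hrow : ∀ j, F⁻¹ i j = 0 := by
        intro j
        have h1 := h j (Finset.mem_univ j)
        have := hinv i j
        linarith
      have : F⁻¹.det = 0 := Matrix.det_eq_zero_of_row_eq_zero i hrow
      rw [Matrix.det_nonsing_inv, Ring.inverse_eq_inv'] at this
      exact hdet (inv_eq_zero.mp this)
  · intro i
    have : (fun i => ∑ j, -(F⁻¹ i j)) = (-F⁻¹).mulVec (fun _ => 1) := by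
      funext k
      simp [Matrix.mulVec, dotProduct]
    rw [this]
    rw [show (-F⁻¹).mulVec (fun _ => (1:ℝ)) = -(F⁻¹.mulVec fun _ => 1) by
      rw [Matrix.neg_mulVec]]
    rw [show F.mulVec (-(F⁻¹.mulVec fun _ => 1)) = -((F * F⁻¹).mulVec fun _ => 1) by
      rw [Matrix.mulVec_neg, Matrix.mulVec_mulVec]]
    rw [Matrix.mul_nonsing_inv F hdet.isUnit, Matrix.one_mulVec]
    norm_num




theorem spec_eig {n : ℕ} {M : Matrix (Fin n) (Fin n) ℂ} {μ : ℂ}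
    (h : μ ∈ spectrum ℂ M) : ∃ z : Fin n → ℂ, z ≠ 0 ∧ M.mulVec z = μ • z := by
  rw [spectrum.mem_iff] at h
  rw [Matrix.isUnit_iff_isUnit_det, isUnit_iff_ne_zero, not_not] at h
  obtain ⟨z, hz, hMz⟩ := Matrix.exists_mulVec_eq_zero_iff.mpr h
  refine ⟨z, hz, ?_⟩
  rw [Matrix.sub_mulVec, Algebra.algebraMap_eq_smul_one, Matrix.smul_mulVec,
    Matrix.one_mulVec, sub_eq_zero] at hMz
  exact hMz.symm

theorem hurwitz_of_posneg {n : ℕ} {F : Matrix (Fin n) (Fin n) ℝ} (hF : Metzler F)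
    {ω : Fin n → ℝ} (hω : ∀ i, 0 < ω i) (hFω : ∀ i, F.mulVec ω i < 0) :
    Hurwitz F := by
  intro μ hμ
  obtain ⟨z, hz, hMz⟩ := spec_eig hμ
  -- pick argmax of |z i| / ω i
  have hne : (Finset.univ : Finset (Fin n)).Nonempty := by
    by_contra h
    rw [Finset.not_nonempty_iff_eq_empty, Finset.univ_eq_empty_iff] at h
    exact hz (funext fun i => absurd trivial (h.elim i))
  obtain ⟨i, -, hi⟩ := Finset.exists_max_image Finset.univ
    (fun j => ‖z j‖ / ω j) hne
  set r := ‖z i‖ / ω i with hr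
  have hrpos : 0 < r := by
    obtain ⟨k, hk⟩ := Function.ne_iff.mp hz
    have : 0 < ‖z k‖ / ω k :=
      div_pos (by simpa using hk) (hω k)
    exact lt_of_lt_of_le this (hi k (Finset.mem_univ k))
  have hzi : ‖z i‖ = r * ω i := by
    rw [hr, div_mul_cancel₀ _ (hω i).ne']
  have hle : ∀ j, ‖z j‖ ≤ r * ω j := by
    intro j
    have := hi j (Finset.mem_univ j)
    rwa [div_le_iff₀ (hω j)] at this
  -- eigenvalue equation at i
  have heq : ∑ j, (F i j : ℂ) * z j = μ * z i := by
    have := congrFun hMz i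
    simpa [Matrix.mulVec, dotProduct, Matrix.map_apply] using this
  have hsplit : (μ - (F i i : ℂ)) * z i = ∑ j ∈ Finset.univ.erase i, (F i j : ℂ) * z j := by
    rw [sub_mul, ← heq, ← Finset.add_sum_erase Finset.univ _ (Finset.mem_univ i)]
    ring
  have habs : ‖(μ - (F i i : ℂ)) * z i‖
      ≤ ∑ j ∈ Finset.univ.erase i, F i j * ‖z j‖ := by
    rw [hsplit]
    refine le_trans (norm_sum_le _ _) ?_
    apply Finset.sum_le_sum
    intro j hj
    rw [norm_mul, Complex.norm_real, Real.norm_eq_abs,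
      abs_of_nonneg (hF i j (Finset.ne_of_mem_erase hj).symm)]
  have hsum : ∑ j ∈ Finset.univ.erase i, F i j * ‖z j‖
      ≤ r * (F.mulVec ω i - F i i * ω i) := by
    have h1 : ∑ j ∈ Finset.univ.erase i, F i j * ‖z j‖
        ≤ ∑ j ∈ Finset.univ.erase i, F i j * (r * ω j) := by
      apply Finset.sum_le_sum
      intro j hj
      exact mul_le_mul_of_nonneg_left (hle j) (hF i j (Finset.ne_of_mem_erase hj).symm)
    refine le_trans h1 (le_of_eq ?_)
    have hmv : F.mulVec ω i = F i i * ω i + ∑ j ∈ Finset.univ.erase i, F i j * ω j := by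
      rw [show F.mulVec ω i = ∑ j, F i j * ω j from rfl,
        ← Finset.add_sum_erase Finset.univ (fun j => F i j * ω j) (Finset.mem_univ i)]
    have hcalc : ∑ j ∈ Finset.univ.erase i, F i j * (r * ω j)
        = r * ∑ j ∈ Finset.univ.erase i, F i j * ω j := by
      rw [Finset.mul_sum]
      exact Finset.sum_congr rfl fun j _ => by ring
    rw [hcalc, hmv]
    ring
  have hkey : ‖μ - (F i i : ℂ)‖ * (r * ω i) < -(F i i) * (r * ω i) := by
    have h2 : r * (F.mulVec ω i - F i i * ω i) < r * (-(F i i) * ω i) := by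
      apply mul_lt_mul_of_pos_left _ hrpos
      have := hFω i
      linarith
    calc ‖μ - (F i i : ℂ)‖ * (r * ω i)
        = ‖(μ - (F i i : ℂ)) * z i‖ := by rw [norm_mul, hzi]
      _ ≤ ∑ j ∈ Finset.univ.erase i, F i j * ‖z j‖ := habs
      _ ≤ r * (F.mulVec ω i - F i i * ω i) := hsum
      _ < r * (-(F i i) * ω i) := h2
      _ = -(F i i) * (r * ω i) := by ring
  have hpos : 0 < r * ω i := mul_pos hrpos (hω i)
  have hlt : ‖μ - (F i i : ℂ)‖ < -(F i i) :=
    lt_of_mul_lt_mul_right (by linarith [hkey]) (le_of_lt hpos) |>.trans_le (le_refl _)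
  have : μ.re - F i i ≤ ‖μ - (F i i : ℂ)‖ := by
    have := Complex.abs_re_le_norm (μ - (F i i : ℂ))
    simp only [Complex.sub_re, Complex.ofReal_re] at this
    exact le_trans (le_abs_self _) this
  linarith




theorem eps_lemma {m : ℕ} (a b : Fin m → ℝ) (hb : ∀ i, 0 < b i) :
    ∃ ε : ℝ, 0 < ε ∧ ∀ i, ε * a i < b i := by
  rcases isEmpty_or_nonempty (Fin m) with h | h
  · exact ⟨1, one_pos, fun i => isEmptyElim i⟩
  · set ε := Finset.univ.inf' Finset.univ_nonempty (fun i => b i / (|a i| + 1)) with hε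
    have hεpos : 0 < ε := by
      rw [hε, Finset.lt_inf'_iff]
      intro i _
      exact div_pos (hb i) (by positivity)
    refine ⟨ε, hεpos, fun i => ?_⟩
    have h1 : ε ≤ b i / (|a i| + 1) := Finset.inf'_le _ (Finset.mem_univ i)
    have h2 : (0:ℝ) < |a i| + 1 := by positivity
    calc ε * a i ≤ ε * |a i| := mul_le_mul_of_nonneg_left (le_abs_self _) hεpos.le
      _ < ε * (|a i| + 1) := by nlinarith
      _ ≤ (b i / (|a i| + 1)) * (|a i| + 1) := mul_le_mul_of_nonneg_right h1 h2.le
      _ = b i := div_mul_cancel₀ _ h2.ne'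

theorem hurwitz_det_ne_zero {n : ℕ} {F : Matrix (Fin n) (Fin n) ℝ}
    (h : Hurwitz F) : F.det ≠ 0 := by
  intro hdet
  have hdetC : (F.map (Complex.ofReal ·)).det = 0 := by
    rw [show (F.map (Complex.ofReal ·)) = Complex.ofRealHom.mapMatrix F from rfl,
      ← RingHom.map_det, hdet, map_zero]
  have h0 : (0 : ℂ) ∈ spectrum ℂ (F.map (Complex.ofReal ·)) := by
    rw [spectrum.mem_iff, map_zero, zero_sub, Matrix.isUnit_iff_isUnit_det,
      Matrix.det_neg, hdetC, mul_zero]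
    exact not_isUnit_zero
  have := h 0 h0
  simp at this

theorem map_shift {n : ℕ} (F : Matrix (Fin n) (Fin n) ℝ) (s : ℝ) :
    (F - s • (1 : Matrix (Fin n) (Fin n) ℝ)).map (Complex.ofReal ·)
      = F.map (Complex.ofReal ·) - (s : ℂ) • (1 : Matrix (Fin n) (Fin n) ℂ) := by
  ext i j
  simp only [Matrix.map_apply, Matrix.sub_apply, Matrix.smul_apply, Matrix.one_apply,
    smul_eq_mul]
  by_cases hij : i = j <;> simp [hij]

theorem hurwitz_shift {n : ℕ} {F : Matrix (Fin n) (Fin n) ℝ}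
    (h : Hurwitz F) {s : ℝ} (hs : 0 ≤ s) :
    Hurwitz (F - s • (1 : Matrix (Fin n) (Fin n) ℝ)) := by
  intro μ hμ
  rw [map_shift] at hμ
  have : μ + (s : ℂ) ∈ spectrum ℂ (F.map (Complex.ofReal ·)) := by
    rw [spectrum.mem_iff] at hμ ⊢
    convert hμ using 2
    rw [Algebra.algebraMap_eq_smul_one, Algebra.algebraMap_eq_smul_one, add_smul]
    abel
  have := h _ this
  simp only [Complex.add_re, Complex.ofReal_re] at this
  linarith

/-- The shifted matrix family used in the homotopy argument. -/
def Gm {n : ℕ} (F : Matrix (Fin n) (Fin n) ℝ) (s : ℝ) : Matrix (Fin n) (Fin n) ℝ :=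
  F - s • 1

theorem Gm_metzler {n : ℕ} {F : Matrix (Fin n) (Fin n) ℝ} (hF : Metzler F) (s : ℝ) :
    Metzler (Gm F s) := by
  intro i j hij
  simp only [Gm, Matrix.sub_apply, Matrix.smul_apply, Matrix.one_apply_ne hij,
    smul_eq_mul, mul_zero, sub_zero]
  exact hF i j hij

theorem Gm_mulVec {n : ℕ} (F : Matrix (Fin n) (Fin n) ℝ) (s : ℝ) (x : Fin n → ℝ) :
    (Gm F s).mulVec x = F.mulVec x - s • x := by
  rw [Gm, Matrix.sub_mulVec, Matrix.smul_mulVec, Matrix.one_mulVec]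

theorem Gm_continuous {n : ℕ} (F : Matrix (Fin n) (Fin n) ℝ) :
    Continuous (Gm F) :=
  continuous_const.sub (continuous_id.smul continuous_const)

theorem hurwitz_inv_nonpos {n : ℕ} {F : Matrix (Fin n) (Fin n) ℝ}
    (hF : Metzler F) (hH : Hurwitz F) : ∀ i j, F⁻¹ i j ≤ 0 := by
  set S : ℝ := 1 + ∑ i, ∑ j, |F i j| with hS
  have hSpos : 0 < S := by
    have : (0:ℝ) ≤ ∑ i, ∑ j, |F i j| :=
      Finset.sum_nonneg fun i _ => Finset.sum_nonneg fun j _ => abs_nonneg _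
    linarith
  have hGH : ∀ s : ℝ, 0 ≤ s → Hurwitz (Gm F s) := fun s hs => hurwitz_shift hH hs
  have hGdet : ∀ s : ℝ, 0 ≤ s → (Gm F s).det ≠ 0 := fun s hs =>
    hurwitz_det_ne_zero (hGH s hs)
  -- top endpoint
  have hStop : PosNeg (Gm F S) := by
    refine ⟨fun _ => 1, fun _ => one_pos, fun i => ?_⟩
    rw [Gm_mulVec]
    simp only [Pi.sub_apply, Pi.smul_apply, smul_eq_mul, mul_one]
    have h1 : F.mulVec (fun _ => 1) i = ∑ j, F i j := by
      simp [Matrix.mulVec, dotProduct]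
    rw [h1]
    have h2 : ∑ j, F i j ≤ ∑ j, |F i j| :=
      Finset.sum_le_sum fun j _ => le_abs_self _
    have h3 : ∑ j, |F i j| ≤ ∑ i, ∑ j, |F i j| :=
      Finset.single_le_sum (f := fun i => ∑ j, |F i j|)
        (fun i _ => Finset.sum_nonneg fun j _ => abs_nonneg _) (Finset.mem_univ i)
    rw [hS]
    linarith
  set K : Set ℝ := {s | s ∈ Set.Icc 0 S ∧ ∀ i j, (Gm F s)⁻¹ i j ≤ 0} with hK
  have hSK : S ∈ K :=
    ⟨⟨hSpos.le, le_refl _⟩, Finv_nonpos (Gm_metzler hF S) hStop⟩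
  have hKne : K.Nonempty := ⟨S, hSK⟩
  have hbdd : BddBelow K := ⟨0, fun x hx => hx.1.1⟩
  set σ := sInf K with hσ
  have hσ0le : 0 ≤ σ := le_csInf hKne fun x hx => hx.1.1
  have hσleS : σ ≤ S := csInf_le hbdd hSK
  have hσK : σ ∈ K := by
    refine ⟨⟨hσ0le, hσleS⟩, fun i j => ?_⟩
    have hcl : σ ∈ closure K := csInf_mem_closure hKne hbdd
    haveI hnb : (nhdsWithin σ K).NeBot := mem_closure_iff_nhdsWithin_neBot.mp hcl
    have hca : ContinuousAt (fun s => (Gm F s)⁻¹ i j) σ := by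
      have heq : (fun s => (Gm F s)⁻¹ i j)
          = fun s => ((Gm F s).det)⁻¹ * (Gm F s).adjugate i j := by
        funext s
        rw [Matrix.inv_def, Ring.inverse_eq_inv', Matrix.smul_apply, smul_eq_mul]
      rw [heq]
      exact ContinuousAt.mul
        (((Gm_continuous F).matrix_det.continuousAt).inv₀ (hGdet σ hσ0le))
        (((Gm_continuous F).matrix_adjugate.matrix_elem i j).continuousAt)
    have htd : Filter.Tendsto (fun s => (Gm F s)⁻¹ i j) (nhdsWithin σ K)
        (nhds ((Gm F σ)⁻¹ i j)) := hca.continuousWithinAt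
    refine le_of_tendsto htd ?_
    filter_upwards [self_mem_nhdsWithin] with s hs
    exact hs.2 i j
  have hσzero : σ = 0 := by
    by_contra hne
    have hσpos : 0 < σ := lt_of_le_of_ne hσ0le (Ne.symm hne)
    obtain ⟨ω, hω, hGσω⟩ := exists_omega (hGdet σ hσ0le) hσK.2
    obtain ⟨ε, hεpos, hε⟩ := eps_lemma ω (fun i => -((Gm F σ).mulVec ω i))
      (fun i => neg_pos.mpr (hGσω i))
    set δ := min σ ε with hδ
    have hδpos : 0 < δ := lt_min hσpos hεpos
    have hδσ : δ ≤ σ := min_le_left _ _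
    have hδε : δ ≤ ε := min_le_right _ _
    have hmem : σ - δ ∈ K := by
      refine ⟨⟨by linarith, by linarith⟩, ?_⟩
      apply Finv_nonpos (Gm_metzler hF _)
      refine ⟨ω, hω, fun i => ?_⟩
      rw [Gm_mulVec]
      have h1 : (Gm F σ).mulVec ω i = F.mulVec ω i - σ * ω i := by
        rw [Gm_mulVec]; simp
      have h2 : ε * ω i < -((Gm F σ).mulVec ω i) := hε i
      have h3 : δ * ω i ≤ ε * ω i := mul_le_mul_of_nonneg_right hδε (hω i).le
      simp only [Pi.sub_apply, Pi.smul_apply, smul_eq_mul]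
      nlinarith
    have := csInf_le hbdd hmem
    rw [← hσ] at this
    linarith
  have hG0 : Gm F 0 = F := by simp [Gm]
  have := hσK.2
  rw [hσzero, hG0] at this
  exact this

theorem metzler_key_lemma (n m : ℕ) (F : Matrix (Fin n) (Fin n) ℝ)
    (g : Fin n → ℝ) (H : Matrix (Fin m) (Fin n) ℝ) (v : Fin m → ℝ)
    (hF : Metzler F) (hg : ∀ i, 0 ≤ g i) (hH : ∀ i j, 0 ≤ H i j) :
    (Hurwitz F ∧ ∀ i, -(H.mulVec (F⁻¹.mulVec g)) i < v i) ↔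
      ∃ ω : Fin n → ℝ, (∀ i, 0 < ω i) ∧
        (∀ i, H.mulVec ω i < v i) ∧ (∀ i, F.mulVec ω i + g i < 0) := by
  constructor
  · rintro ⟨hHur, hv⟩
    have hdet : F.det ≠ 0 := hurwitz_det_ne_zero hHur
    have hinv : ∀ i j, F⁻¹ i j ≤ 0 := hurwitz_inv_nonpos hF hHur
    obtain ⟨ω₀, hω₀, hFω₀⟩ := exists_omega hdet hinv
    -- x = -F⁻¹ g  (nonnegative, with F x = -g)
    set x : Fin n → ℝ := -(F⁻¹.mulVec g) with hx
    have hxnn : ∀ i, 0 ≤ x i := by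
      intro i
      rw [hx]
      simp only [Pi.neg_apply, Matrix.mulVec, dotProduct, ← Finset.sum_neg_distrib]
      apply Finset.sum_nonneg
      intro j _
      have := hinv i j
      have := hg j
      nlinarith
    have hFx : F.mulVec x = -g := by
      rw [hx, Matrix.mulVec_neg, Matrix.mulVec_mulVec, Matrix.mul_nonsing_inv F hdet.isUnit,
        Matrix.one_mulVec]
    have hHx : ∀ i, H.mulVec x i < v i := by
      intro i
      have : H.mulVec x i = -(H.mulVec (F⁻¹.mulVec g)) i := by
        rw [hx, Matrix.mulVec_neg]; simp
      rw [this]; exact hv i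
    obtain ⟨ε, hεpos, hε⟩ := eps_lemma (fun i => H.mulVec ω₀ i)
      (fun i => v i - H.mulVec x i) (fun i => sub_pos.mpr (hHx i))
    refine ⟨x + ε • ω₀, fun i => ?_, fun i => ?_, fun i => ?_⟩
    · have := hxnn i
      have := hω₀ i
      simp only [Pi.add_apply, Pi.smul_apply, smul_eq_mul]
      nlinarith
    · rw [Matrix.mulVec_add, Matrix.mulVec_smul]
      have := hε i
      simp only [Pi.add_apply, Pi.smul_apply, smul_eq_mul]
      linarith
    · rw [Matrix.mulVec_add, Matrix.mulVec_smul]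
      have h1 : F.mulVec x i = -g i := by rw [hFx]; simp
      have h2 := hFω₀ i
      have := hεpos
      simp only [Pi.add_apply, Pi.smul_apply, smul_eq_mul]
      nlinarith
  · rintro ⟨ω, hω, hHω, hFω⟩
    have hP : PosNeg F := ⟨ω, hω, fun i => by linarith [hFω i, hg i]⟩
    have hHur : Hurwitz F := by
      obtain ⟨ω', hω', hFω'⟩ := hP
      exact hurwitz_of_posneg hF hω' hFω'
    refine ⟨hHur, fun i => ?_⟩
    have hdet : F.det ≠ 0 := hurwitz_det_ne_zero hHur
    have hinv : ∀ i j, F⁻¹ i j ≤ 0 := Finv_nonpos hF hP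
    -- x := -F⁻¹ g ≤ ω
    set x : Fin n → ℝ := -(F⁻¹.mulVec g) with hx
    have hdiff : ∀ j, 0 ≤ ω j - x j := by
      have hkey : (fun j => ω j - x j) = F⁻¹.mulVec (F.mulVec ω + g) := by
        rw [Matrix.mulVec_add, Matrix.mulVec_mulVec, Matrix.nonsing_inv_mul F hdet.isUnit,
          Matrix.one_mulVec]
        funext j
        simp [hx]
      intro j
      have : F⁻¹.mulVec (F.mulVec ω + g) j ≥ 0 := by
        simp only [Matrix.mulVec, dotProduct]
        apply Finset.sum_nonneg
        intro k _
        have h1 := hinv j k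
        have h2 := hFω k
        simp only [Pi.add_apply]
        nlinarith
      rw [← congrFun hkey j] at this
      linarith
    have hHxω : H.mulVec x i ≤ H.mulVec ω i := by
      simp only [Matrix.mulVec, dotProduct]
      apply Finset.sum_le_sum
      intro j _
      have := hdiff j
      have := hH i j
      nlinarith
    have : -(H.mulVec (F⁻¹.mulVec g)) i = H.mulVec x i := by
      rw [hx, Matrix.mulVec_neg]; simp
    rw [this]
    exact lt_of_le_of_lt hHxω (hHω i)
end

section
/- Let q be an even positive integer, and for each i = 1,…,q let F_i ∈ ℝ^{n_i×n_i} be Metzler and H_i ∈ ℝ^{n_{i−1}×n_i}, g ∈ ℝ^{n_q}, v ∈ ℝ^{n_0} with H_i and g entrywise nonnegative. Then F₁,…,F_q are all Hurwitz stable and (H₁F₁⁻¹)⋯(H_qF_q⁻¹) g < v (entrywise) if and only if there exist entrywise positive vectors ω_i ∈ ℝ^{n_i} (i = 1,…,q) such that H₁ ω₁ < v, F_i ω_i + H_{i+1} ω_{i+1} < 0 for i = 1,…,q−1, and F_q ω_q + g < 0 (all entrywise). -/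
open Matrix

/-- The vector `(H 0 * (F 0)⁻¹) ⋯ (H (q-1) * (F (q-1))⁻¹) g`, where
`H i : ℝ^{n i × n (i+1)}` and `F i : ℝ^{n (i+1) × n (i+1)}`.  Here `H i` and `F i`
play the roles of `H_{i+1}` and `F_{i+1}` of the chain. -/
noncomputable def chainVec (n : ℕ → ℕ)
    (H : ∀ i : ℕ, Matrix (Fin (n i)) (Fin (n (i + 1))) ℝ)
    (F : ∀ i : ℕ, Matrix (Fin (n (i + 1))) (Fin (n (i + 1))) ℝ) :
    ∀ q : ℕ, (Fin (n q) → ℝ) → (Fin (n 0) → ℝ)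
  | 0, g => g
  | (q + 1), g => chainVec n H F q ((H q * (F q)⁻¹).mulVec g)

section Base
variable {m : ℕ} {M : Matrix (Fin m) (Fin m) ℝ} {ω : Fin m → ℝ}

/-- helper: positive lower bound for finitely many positives -/
lemma exists_pos_le {k : ℕ} (d : Fin k → ℝ) (hd : ∀ j, 0 < d j) :
    ∃ ε : ℝ, 0 < ε ∧ ∀ j, ε ≤ d j := by
  cases isEmpty_or_nonempty (Fin k) with
  | inl h => exact ⟨1, one_pos, fun j => (h.elim j)⟩
  | inr h =>
    obtain ⟨i, -, hi⟩ := Finset.exists_min_image Finset.univ d ⟨h.some, Finset.mem_univ _⟩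
    exact ⟨d i, hd i, fun j => hi j (Finset.mem_univ j)⟩

lemma exists_pos_eps {k : ℕ} (a b c : Fin k → ℝ) (h : ∀ j, a j < c j) :
    ∃ ε : ℝ, 0 < ε ∧ ∀ j, a j + ε * b j < c j := by
  obtain ⟨ε, hε, hle⟩ := exists_pos_le (fun j => (c j - a j) / (1 + |b j|))
    (fun j => div_pos (by linarith [h j]) (by positivity))
  refine ⟨ε, hε, fun j => ?_⟩
  have h1 : (0:ℝ) < 1 + |b j| := by positivity
  have h2 : ε * b j < (c j - a j) := by
    calc ε * b j ≤ ε * |b j| := by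
          exact mul_le_mul_of_nonneg_left (le_abs_self _) hε.le
    _ < ε * (1 + |b j|) := by nlinarith
    _ ≤ ((c j - a j) / (1 + |b j|)) * (1 + |b j|) :=
          mul_le_mul_of_nonneg_right (hle j) h1.le
    _ = c j - a j := div_mul_cancel₀ _ h1.ne'
  linarith

lemma metzler_nonneg_of_mulVec_nonpos (hM : Metzler M)
    (hω : ∀ j, 0 < ω j) (hMω : ∀ j, M.mulVec ω j < 0)
    {x : Fin m → ℝ} (hx : ∀ j, M.mulVec x j ≤ 0) : ∀ j, 0 ≤ x j := by
  by_contra hc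
  push_neg at hc
  obtain ⟨k, hk⟩ := hc
  obtain ⟨i, -, hi⟩ := Finset.exists_max_image Finset.univ (fun j => -x j / ω j)
    ⟨k, Finset.mem_univ k⟩
  set c : ℝ := -x i / ω i with hc'
  have hcpos : 0 < c := lt_of_lt_of_le (div_pos (by linarith) (hω k)) (hi k (Finset.mem_univ k))
  have hciω : c * ω i = -x i := div_mul_cancel₀ _ (hω i).ne'
  have hxi : x i = -(c * ω i) := by linarith
  have hbound : ∀ j, -(c * ω j) ≤ x j := by
    intro j
    have h1 := hi j (Finset.mem_univ j)
    have h2 := (div_le_iff₀ (hω j)).mp h1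
    linarith
  have key : -(c * M.mulVec ω i) ≤ M.mulVec x i := by
    simp only [Matrix.mulVec, dotProduct, Finset.mul_sum, ← Finset.sum_neg_distrib]
    refine Finset.sum_le_sum fun j _ => ?_
    rcases eq_or_ne j i with rfl | hji
    · rw [hxi]; ring_nf; exact le_of_eq (by ring)
    · have hMij : 0 ≤ M i j := hM i j (Ne.symm hji)
      have := mul_le_mul_of_nonneg_left (hbound j) hMij
      nlinarith
  have : 0 < M.mulVec x i := lt_of_lt_of_le (by nlinarith [hMω i]) key
  exact absurd (hx i) (not_le.mpr this)

end Base

section Base2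
variable {m : ℕ} {M : Matrix (Fin m) (Fin m) ℝ} {ω : Fin m → ℝ}

lemma metzler_det_ne (hM : Metzler M)
    (hω : ∀ j, 0 < ω j) (hMω : ∀ j, M.mulVec ω j < 0) : M.det ≠ 0 := by
  intro hdet
  obtain ⟨x, hx0, hx⟩ := (Matrix.exists_mulVec_eq_zero_iff).mpr hdet
  have h1 : ∀ j, 0 ≤ x j :=
    metzler_nonneg_of_mulVec_nonpos hM hω hMω (fun j => le_of_eq (congrFun hx j))
  have h2 : ∀ j, 0 ≤ (-x) j := by
    refine metzler_nonneg_of_mulVec_nonpos hM hω hMω (fun j => ?_)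
    rw [Matrix.mulVec_neg, hx]
    simp
  refine hx0 (funext fun j => ?_)
  have := h2 j
  simp only [Pi.neg_apply] at this
  have := h1 j
  simp only [Pi.zero_apply]
  linarith [h2 j, h1 j]

lemma metzler_mul_inv (hM : Metzler M)
    (hω : ∀ j, 0 < ω j) (hMω : ∀ j, M.mulVec ω j < 0) : M * M⁻¹ = 1 :=
  Matrix.mul_nonsing_inv M (isUnit_iff_ne_zero.mpr (metzler_det_ne hM hω hMω))

lemma metzler_mulVec_inv (hM : Metzler M)
    (hω : ∀ j, 0 < ω j) (hMω : ∀ j, M.mulVec ω j < 0)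
    (w : Fin m → ℝ) : M.mulVec (-(M⁻¹.mulVec w)) = -w := by
  rw [Matrix.mulVec_neg, Matrix.mulVec_mulVec, metzler_mul_inv hM hω hMω, Matrix.one_mulVec]

lemma sandwich_lower (hM : Metzler M)
    (hω : ∀ j, 0 < ω j) (hMω : ∀ j, M.mulVec ω j < 0)
    {w : Fin m → ℝ} (hw : ∀ j, 0 ≤ w j) : ∀ j, 0 ≤ (-(M⁻¹.mulVec w)) j := by
  refine metzler_nonneg_of_mulVec_nonpos hM hω hMω (fun j => ?_)
  rw [metzler_mulVec_inv hM hω hMω]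
  simpa using hw j

lemma sandwich_upper (hM : Metzler M)
    (hω : ∀ j, 0 < ω j) (hMω : ∀ j, M.mulVec ω j < 0)
    {w : Fin m → ℝ} (hbd : ∀ j, M.mulVec ω j + w j ≤ 0) :
    ∀ j, (-(M⁻¹.mulVec w)) j ≤ ω j := by
  have key := metzler_nonneg_of_mulVec_nonpos hM hω hMω (x := ω + M⁻¹.mulVec w) (fun j => by
    have h : M.mulVec (ω + M⁻¹.mulVec w) = M.mulVec ω + w := by
      rw [Matrix.mulVec_add, Matrix.mulVec_mulVec, metzler_mul_inv hM hω hMω, Matrix.one_mulVec]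
    rw [h]
    exact hbd j)
  intro j
  have := key j
  simp only [Pi.add_apply] at this
  simp only [Pi.neg_apply]
  linarith

lemma mulVec_nonneg {a b : ℕ} {A : Matrix (Fin a) (Fin b) ℝ} (hA : ∀ j k, 0 ≤ A j k)
    {x : Fin b → ℝ} (hx : ∀ j, 0 ≤ x j) : ∀ j, 0 ≤ A.mulVec x j := by
  intro j
  simp only [Matrix.mulVec, dotProduct]
  exact Finset.sum_nonneg fun k _ => mul_nonneg (hA j k) (hx k)

lemma mulVec_mono {a b : ℕ} {A : Matrix (Fin a) (Fin b) ℝ} (hA : ∀ j k, 0 ≤ A j k)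
    {x y : Fin b → ℝ} (hxy : ∀ j, x j ≤ y j) : ∀ j, A.mulVec x j ≤ A.mulVec y j := by
  intro j
  simp only [Matrix.mulVec, dotProduct]
  exact Finset.sum_le_sum fun k _ => mul_le_mul_of_nonneg_left (hxy k) (hA j k)

end Base2

section L3
variable {m : ℕ} {M : Matrix (Fin m) (Fin m) ℝ} {ω : Fin m → ℝ}

lemma hurwitz_of_cert (hM : Metzler M)
    (hω : ∀ j, 0 < ω j) (hMω : ∀ j, M.mulVec ω j < 0) : Hurwitz M := by
  intro μ hμ
  set A : Matrix (Fin m) (Fin m) ℂ := M.map (Complex.ofReal ·) with hA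
  have hdet : (μ • (1 : Matrix (Fin m) (Fin m) ℂ) - A).det = 0 := by
    have hnu : ¬IsUnit (algebraMap ℂ (Matrix (Fin m) (Fin m) ℂ) μ - A) :=
      spectrum.mem_iff.mp hμ
    rw [Algebra.algebraMap_eq_smul_one] at hnu
    by_contra hne
    exact hnu ((Matrix.isUnit_iff_isUnit_det _).mpr (isUnit_iff_ne_zero.mpr hne))
  obtain ⟨x, hx0, hx⟩ := (Matrix.exists_mulVec_eq_zero_iff).mpr hdet
  have hAx : A.mulVec x = μ • x := by
    have h1 := hx
    rw [Matrix.sub_mulVec, Matrix.smul_mulVec, Matrix.one_mulVec, sub_eq_zero] at h1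
    exact h1.symm
  -- pick index maximizing |x j| / ω j
  obtain ⟨k, hk⟩ : ∃ k, x k ≠ 0 := by
    by_contra hc
    push_neg at hc
    exact hx0 (funext fun j => hc j)
  obtain ⟨i, -, hi⟩ := Finset.exists_max_image Finset.univ
    (fun j => ‖x j‖ / ω j) ⟨k, Finset.mem_univ k⟩
  set c : ℝ := ‖x i‖ / ω i with hc'
  have hcpos : 0 < c :=
    lt_of_lt_of_le (div_pos (by simpa using hk) (hω k)) (hi k (Finset.mem_univ k))
  have hxi : ‖x i‖ = c * ω i := (div_mul_cancel₀ _ (hω i).ne').symm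
  have hbound : ∀ j, ‖x j‖ ≤ c * ω j := by
    intro j
    have h1 := hi j (Finset.mem_univ j)
    exact (div_le_iff₀ (hω j)).mp h1
  -- key inequality
  have hsum : (μ - (M i i : ℂ)) * x i = ∑ j ∈ Finset.univ.erase i, (M i j : ℂ) * x j := by
    have h2 : ∑ j, (M i j : ℂ) * x j = μ * x i := by
      have := congrFun hAx i
      simpa [Matrix.mulVec, dotProduct, hA, Matrix.map_apply] using this
    rw [← Finset.add_sum_erase _ _ (Finset.mem_univ i)] at h2
    have : (μ - (M i i : ℂ)) * x i = μ * x i - (M i i : ℂ) * x i := by ring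
    rw [this, ← h2]
    ring
  have habs : ‖μ - (M i i : ℂ)‖ * (c * ω i) ≤
      c * ∑ j ∈ Finset.univ.erase i, M i j * ω j := by
    calc ‖μ - (M i i : ℂ)‖ * (c * ω i)
        = ‖(μ - (M i i : ℂ)) * x i‖ := by rw [norm_mul, hxi]
      _ = ‖∑ j ∈ Finset.univ.erase i, (M i j : ℂ) * x j‖ := by rw [hsum]
      _ ≤ ∑ j ∈ Finset.univ.erase i, ‖(M i j : ℂ) * x j‖ :=
          norm_sum_le _ _
      _ ≤ ∑ j ∈ Finset.univ.erase i, M i j * (c * ω j) := by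
          refine Finset.sum_le_sum fun j hj => ?_
          have hMij : 0 ≤ M i j := hM i j (Ne.symm (Finset.ne_of_mem_erase hj))
          rw [norm_mul, Complex.norm_of_nonneg hMij]
          exact mul_le_mul_of_nonneg_left (hbound j) hMij
      _ = c * ∑ j ∈ Finset.univ.erase i, M i j * ω j := by
          rw [Finset.mul_sum]; congr 1; funext j; ring
  have hrow : ∑ j ∈ Finset.univ.erase i, M i j * ω j < -(M i i * ω i) := by
    have h3 : M.mulVec ω i = M i i * ω i + ∑ j ∈ Finset.univ.erase i, M i j * ω j := by
      simp only [Matrix.mulVec, dotProduct]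
      rw [← Finset.add_sum_erase _ _ (Finset.mem_univ i)]
    have := hMω i
    linarith [this, h3 ▸ this]
  have hlt : ‖μ - (M i i : ℂ)‖ < -(M i i) := by
    have hωipos := hω i
    have h4 : ‖μ - (M i i : ℂ)‖ * (c * ω i) < c * (-(M i i * ω i)) :=
      lt_of_le_of_lt habs (by nlinarith)
    by_contra hcon
    push_neg at hcon
    have h5 : (-(M i i)) * (c * ω i) ≤ ‖μ - (M i i : ℂ)‖ * (c * ω i) :=
      mul_le_mul_of_nonneg_right hcon (by positivity)
    nlinarith
  have hre : (μ - (M i i : ℂ)).re ≤ ‖μ - (M i i : ℂ)‖ := Complex.re_le_norm _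
  have : (μ - (M i i : ℂ)).re = μ.re - M i i := by simp
  linarith

end L3

section L4
variable {m : ℕ} {M : Matrix (Fin m) (Fin m) ℝ}

private def Sset (M : Matrix (Fin m) (Fin m) ℝ) : Set ℝ :=
  {s | 0 ≤ s ∧ (s • (1 : Matrix (Fin m) (Fin m) ℝ) - M).det ≠ 0 ∧
    ∀ i j, 0 ≤ (s • (1 : Matrix (Fin m) (Fin m) ℝ) - M)⁻¹ i j}

lemma shift_metzler (hM : Metzler M) (s : ℝ) :
    Metzler (-(s • (1 : Matrix (Fin m) (Fin m) ℝ) - M)) := by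
  intro i j hij
  simp [Matrix.one_apply_ne hij, hM i j hij]

lemma shift_mulVec (s : ℝ) (x : Fin m → ℝ) (j : Fin m) :
    (-(s • (1 : Matrix (Fin m) (Fin m) ℝ) - M)).mulVec x j = M.mulVec x j - s * x j := by
  rw [Matrix.neg_mulVec, Matrix.sub_mulVec, Matrix.smul_mulVec, Matrix.one_mulVec]
  simp

lemma mem_Sset (hM : Metzler M) {t : ℝ} (ht : 0 ≤ t) {ω' : Fin m → ℝ}
    (hω' : ∀ j, 0 < ω' j) (hlt : ∀ j, M.mulVec ω' j < t * ω' j) : t ∈ Sset M := by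
  set A := t • (1 : Matrix (Fin m) (Fin m) ℝ) - M with hA
  have hMetz : Metzler (-A) := shift_metzler hM t
  have hmv : ∀ j, (-A).mulVec ω' j < 0 := fun j => by
    rw [shift_mulVec]; linarith [hlt j]
  have hdet : A.det ≠ 0 := by
    have h1 : (-A).det ≠ 0 := metzler_det_ne hMetz hω' hmv
    intro h2
    rw [Matrix.det_neg, h2, mul_zero] at h1
    exact h1 rfl
  have hAinv : A * A⁻¹ = 1 := Matrix.mul_nonsing_inv A (isUnit_iff_ne_zero.mpr hdet)
  refine ⟨ht, hdet, fun i j => ?_⟩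
  have hx : ∀ k, 0 ≤ A⁻¹.mulVec (Pi.single j 1) k := by
    refine metzler_nonneg_of_mulVec_nonpos hMetz hω' hmv (fun k => ?_)
    rw [Matrix.neg_mulVec, Matrix.mulVec_mulVec, hAinv, Matrix.one_mulVec]
    by_cases hkj : k = j <;> simp [Pi.single_apply, hkj]
  have h5 := hx i
  rw [Matrix.mulVec_single] at h5
  rw [← hA]
  simpa using h5

lemma extract_Sset (hM : Metzler M) {s : ℝ} (hs : s ∈ Sset M) :
    ∃ ωs : Fin m → ℝ, (∀ j, 0 < ωs j) ∧ ∀ j, M.mulVec ωs j = s * ωs j - 1 := by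
  set A := s • (1 : Matrix (Fin m) (Fin m) ℝ) - M with hA
  obtain ⟨hs0, hdet, hinv⟩ := hs
  set ωs : Fin m → ℝ := A⁻¹.mulVec (fun _ => 1) with hωs
  have hnn : ∀ j, 0 ≤ ωs j := mulVec_nonneg (fun i j => hinv i j) (fun _ => zero_le_one)
  rw [← hA] at hdet hinv
  · have hAinv : A * A⁻¹ = 1 := Matrix.mul_nonsing_inv A (isUnit_iff_ne_zero.mpr hdet)
    have hAω : ∀ j, A.mulVec ωs j = 1 := by
      intro j
      rw [hωs, Matrix.mulVec_mulVec, hAinv, Matrix.one_mulVec]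
    have hMω : ∀ j, M.mulVec ωs j = s * ωs j - 1 := by
      intro j
      have := hAω j
      have h2 := shift_mulVec (M := M) s ωs j
      rw [Matrix.neg_mulVec] at h2
      rw [← hA] at h2
      have : -(1:ℝ) = M.mulVec ωs j - s * ωs j := by
        rw [← h2]; simp [this]
      linarith
    have hpos : ∀ j, 0 < ωs j := by
      intro i
      rcases lt_or_eq_of_le (hnn i) with h | h
      · exact h
      · exfalso
        have h1 : A.mulVec ωs i = 1 := hAω i
        have h2 : A.mulVec ωs i ≤ 0 := by
          simp only [Matrix.mulVec, dotProduct]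
          refine Finset.sum_nonpos fun j _ => ?_
          rcases eq_or_ne j i with rfl | hji
          · rw [← h]; ring_nf; exact le_of_eq (by ring)
          · have : A i j ≤ 0 := by
              have := hM i j (Ne.symm hji)
              simp [hA, Matrix.one_apply_ne (Ne.symm hji)]
              linarith
            exact mul_nonpos_of_nonpos_of_nonneg this (hnn j)
        linarith
    exact ⟨ωs, hpos, hMω⟩

end L4

section L4b
variable {m : ℕ} {M : Matrix (Fin m) (Fin m) ℝ}

lemma det_shift_ne_of_hurwitz (hH : Hurwitz M) {s : ℝ} (hs : 0 ≤ s) :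
    (s • (1 : Matrix (Fin m) (Fin m) ℝ) - M).det ≠ 0 := by
  intro hdet
  have hmap : ((s • (1 : Matrix (Fin m) (Fin m) ℝ) - M).map (Complex.ofReal ·)) =
      (s : ℂ) • (1 : Matrix (Fin m) (Fin m) ℂ) - M.map (Complex.ofReal ·) := by
    ext i j
    by_cases hij : i = j <;>
      simp [Matrix.map_apply, Matrix.sub_apply, Matrix.smul_apply, Matrix.one_apply, hij,
        smul_eq_mul]
  have hdetC : ((s : ℂ) • (1 : Matrix (Fin m) (Fin m) ℂ) - M.map (Complex.ofReal ·)).det = 0 := by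
    have h2 := RingHom.map_det Complex.ofRealHom (s • (1 : Matrix (Fin m) (Fin m) ℝ) - M)
    rw [RingHom.mapMatrix_apply] at h2
    rw [← hmap]
    have h3 : ((Complex.ofReal ·) : ℝ → ℂ) = ⇑Complex.ofRealHom := rfl
    rw [h3, ← h2, hdet, map_zero]
  have hmem : (s : ℂ) ∈ spectrum ℂ (M.map (Complex.ofReal ·)) := by
    rw [spectrum.mem_iff, Algebra.algebraMap_eq_smul_one]
    intro hunit
    have := (Matrix.isUnit_iff_isUnit_det _).mp hunit
    rw [hdetC] at this
    exact (isUnit_iff_ne_zero.mp this) rfl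
  have := hH _ hmem
  rw [Complex.ofReal_re] at this
  linarith

lemma cert_of_hurwitz (hM : Metzler M) (hH : Hurwitz M) :
    ∃ ω : Fin m → ℝ, (∀ j, 0 < ω j) ∧ ∀ j, M.mulVec ω j < 0 := by
  -- S is nonempty: large s₀
  obtain ⟨C0, hC0⟩ := Finite.exists_le (fun i => M.mulVec (fun _ => 1) i)
  set s₀ : ℝ := max C0 0 + 1 with hs₀
  have hs₀mem : s₀ ∈ Sset M := by
    refine mem_Sset hM (by positivity) (ω' := fun _ => 1) (fun j => one_pos) (fun j => ?_)
    have := hC0 j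
    have h1 : C0 ≤ max C0 0 := le_max_left _ _
    simp only [mul_one]
    linarith
  have Sne : (Sset M).Nonempty := ⟨s₀, hs₀mem⟩
  have Sbdd : BddBelow (Sset M) := ⟨0, fun s hs => hs.1⟩
  set T : ℝ := sInf (Sset M) with hT
  have hT0 : 0 ≤ T := le_csInf Sne (fun s hs => hs.1)
  -- everything strictly above T is in S
  have habove : ∀ t, T < t → t ∈ Sset M := by
    intro t ht
    obtain ⟨s, hsS, hst⟩ := (csInf_lt_iff Sbdd Sne).mp ht
    obtain ⟨ωs, hωs, hMωs⟩ := extract_Sset hM hsS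
    refine mem_Sset hM (by linarith) hωs (fun j => ?_)
    have := hMωs j
    nlinarith [hωs j]
  -- T is in S by continuity
  have hTmem : T ∈ Sset M := by
    have hdetT : (T • (1 : Matrix (Fin m) (Fin m) ℝ) - M).det ≠ 0 :=
      det_shift_ne_of_hurwitz hH hT0
    refine ⟨hT0, hdetT, fun i j => ?_⟩
    have hA : Continuous (fun t : ℝ => t • (1 : Matrix (Fin m) (Fin m) ℝ) - M) :=
      (continuous_id.smul continuous_const).sub continuous_const
    have hform : ∀ t : ℝ, ((t • (1 : Matrix (Fin m) (Fin m) ℝ) - M)⁻¹) i j =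
        ((t • (1 : Matrix (Fin m) (Fin m) ℝ) - M).det)⁻¹ *
          ((t • (1 : Matrix (Fin m) (Fin m) ℝ) - M).adjugate) i j := by
      intro t
      rw [Matrix.inv_def]
      simp [Ring.inverse_eq_inv', Matrix.smul_apply, smul_eq_mul]
    have h1 : ContinuousAt (fun t : ℝ =>
        ((t • (1 : Matrix (Fin m) (Fin m) ℝ) - M).det)⁻¹ *
        ((t • (1 : Matrix (Fin m) (Fin m) ℝ) - M).adjugate) i j) T :=
      ((hA.matrix_det.continuousAt).inv₀ hdetT).mul
        ((hA.matrix_adjugate.matrix_elem i j).continuousAt)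
    have htend := h1.continuousWithinAt (s := Set.Ioi T).tendsto
    have hge : 0 ≤ ((T • (1 : Matrix (Fin m) (Fin m) ℝ) - M).det)⁻¹ *
        ((T • (1 : Matrix (Fin m) (Fin m) ℝ) - M).adjugate) i j := by
      refine ge_of_tendsto htend ?_
      refine eventually_mem_nhdsWithin.mono (fun t ht => ?_)
      rw [← hform t]
      exact (habove t ht).2.2 i j
    rw [hform T]
    exact hge
  -- T must be 0
  have hTzero : T = 0 := by
    by_contra hne
    have hTpos : 0 < T := lt_of_le_of_ne hT0 (Ne.symm hne)
    obtain ⟨ωT, hωT, hMωT⟩ := extract_Sset hM hTmem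
    obtain ⟨C, hC⟩ := Finite.exists_le ωT
    set C' : ℝ := max C 1 with hC'
    have hC'pos : (0:ℝ) < C' := lt_of_lt_of_le one_pos (le_max_right _ _)
    set d : ℝ := min T (1 / C') with hd
    have hdpos : 0 < d := lt_min hTpos (by positivity)
    set t : ℝ := T - d / 2 with htdef
    have ht0 : 0 ≤ t := by
      have : d ≤ T := min_le_left _ _
      simp only [htdef]
      linarith
    have htT : t < T := by simp only [htdef]; linarith
    have htmem : t ∈ Sset M := by
      refine mem_Sset hM ht0 hωT (fun j => ?_)
      have h1 := hMωT j
      have h2 : ωT j ≤ C' := le_trans (hC j) (le_max_left _ _)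
      have h3 : (T - t) * ωT j < 1 := by
        have hTt : T - t = d / 2 := by simp only [htdef]; ring
        rw [hTt]
        have h4 : d / 2 * ωT j ≤ d / 2 * C' :=
          mul_le_mul_of_nonneg_left h2 (by linarith)
        have h5 : d / 2 < 1 / C' := by
          have : d ≤ 1 / C' := min_le_right _ _
          linarith
        have h6 : d / 2 * C' < (1 / C') * C' := mul_lt_mul_of_pos_right h5 hC'pos
        rw [one_div, inv_mul_cancel₀ hC'pos.ne'] at h6
        linarith
      nlinarith [hωT j]
    have : T ≤ t := csInf_le Sbdd htmem
    linarith
  rw [hTzero] at hTmem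
  obtain ⟨ω0, hω0, hMω0⟩ := extract_Sset hM hTmem
  exact ⟨ω0, hω0, fun j => by have := hMω0 j; simp at this; linarith⟩

end L4b

section Chain
variable (n : ℕ → ℕ)
  (H : ∀ i : ℕ, Matrix (Fin (n i)) (Fin (n (i + 1))) ℝ)
  (F : ∀ i : ℕ, Matrix (Fin (n (i + 1))) (Fin (n (i + 1))) ℝ)

/-- algebraic identity used in both directions -/
lemma double_strip (q : ℕ) (g : Fin (n (q + 2)) → ℝ)
    (hdet1 : (F (q + 1)).det ≠ 0) (hdet0 : (F q).det ≠ 0) :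
    (H q * (F q)⁻¹).mulVec ((H (q + 1) * (F (q + 1))⁻¹).mulVec g) =
      (H q).mulVec (-((F q)⁻¹.mulVec ((H (q + 1)).mulVec (-((F (q + 1))⁻¹.mulVec g))))) := by
  rw [← Matrix.mulVec_mulVec (M := H (q+1)) (N := (F (q+1))⁻¹)]
  rw [← Matrix.mulVec_mulVec (M := H q) (N := (F q)⁻¹)]
  simp [Matrix.mulVec_neg]

lemma chain_bound :
    ∀ q : ℕ, Even q → ∀ (ω : ∀ i : ℕ, Fin (n (i + 1)) → ℝ) (g : Fin (n q) → ℝ),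
    (∀ i, i < q → Metzler (F i)) →
    (∀ i, i < q → ∀ j k, 0 ≤ H i j k) →
    (∀ j, 0 ≤ g j) →
    (∀ i, i < q → ∀ j, 0 < ω i j) →
    (∀ i, i + 1 < q → ∀ j, (F i).mulVec (ω i) j + (H (i + 1)).mulVec (ω (i + 1)) j < 0) →
    (∀ i (h : i + 1 = q), ∀ j, (F i).mulVec (ω i) j +
        g (Fin.cast (congrArg n h) j) < 0) →
    (∀ j, 0 ≤ chainVec n H F q g j) ∧
      (0 < q → ∀ j, chainVec n H F q g j ≤ (H 0).mulVec (ω 0) j) := by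
  intro q
  induction q using Nat.strong_induction_on with
  | _ q IH =>
    match q with
    | 0 =>
      intro _ ω g _ _ hg _ _ _
      exact ⟨hg, fun h => absurd h (lt_irrefl 0)⟩
    | 1 =>
      intro hev
      exact absurd hev (by decide)
    | (q + 2) =>
      intro hev ω g hF hH hg hω hmid hend
      -- certificates
      have hF1 : Metzler (F (q + 1)) := hF (q + 1) (by omega)
      have hF0 : Metzler (F q) := hF q (by omega)
      have hω1 : ∀ j, 0 < ω (q + 1) j := hω (q + 1) (by omega)
      have hω0 : ∀ j, 0 < ω q j := hω q (by omega)
      have hend' : ∀ j, (F (q + 1)).mulVec (ω (q + 1)) j + g j < 0 := by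
        intro j
        exact hend (q + 1) rfl j
      have hcert1 : ∀ j, (F (q + 1)).mulVec (ω (q + 1)) j < 0 := fun j => by
        have := hend' j; have := hg j; linarith
      have hmid' : ∀ j, (F q).mulVec (ω q) j + (H (q + 1)).mulVec (ω (q + 1)) j < 0 :=
        hmid q (by omega)
      have hHnn : ∀ j, 0 ≤ (H (q + 1)).mulVec (ω (q + 1)) j :=
        mulVec_nonneg (hH (q + 1) (by omega)) (fun j => (hω1 j).le)
      have hcert0 : ∀ j, (F q).mulVec (ω q) j < 0 := fun j => by
        have := hmid' j; have := hHnn j; linarith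
      -- sandwich u
      set u : Fin (n (q + 2)) → ℝ := -((F (q + 1))⁻¹.mulVec g) with hu
      have hu0 : ∀ j, 0 ≤ u j := sandwich_lower hF1 hω1 hcert1 hg
      have hu1 : ∀ j, u j ≤ ω (q + 1) j :=
        sandwich_upper hF1 hω1 hcert1 (fun j => (hend' j).le)
      set w : Fin (n (q + 1)) → ℝ := (H (q + 1)).mulVec u with hw
      have hw0 : ∀ j, 0 ≤ w j := mulVec_nonneg (hH (q + 1) (by omega)) hu0
      have hw1 : ∀ j, w j ≤ (H (q + 1)).mulVec (ω (q + 1)) j :=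
        mulVec_mono (hH (q + 1) (by omega)) hu1
      set u'' : Fin (n (q + 1)) → ℝ := -((F q)⁻¹.mulVec w) with hu''
      have hu''0 : ∀ j, 0 ≤ u'' j := sandwich_lower hF0 hω0 hcert0 hw0
      have hu''1 : ∀ j, u'' j ≤ ω q j :=
        sandwich_upper hF0 hω0 hcert0 (fun j => by have := hmid' j; have := hw1 j; linarith)
      set g'' : Fin (n q) → ℝ := (H q).mulVec u'' with hg''
      have hg''0 : ∀ j, 0 ≤ g'' j := mulVec_nonneg (hH q (by omega)) hu''0
      have hg''1 : ∀ j, g'' j ≤ (H q).mulVec (ω q) j := mulVec_mono (hH q (by omega)) hu''1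
      -- chain identity
      have hchain : chainVec n H F (q + 2) g = chainVec n H F q g'' := by
        show chainVec n H F q ((H q * (F q)⁻¹).mulVec ((H (q + 1) * (F (q + 1))⁻¹).mulVec g))
          = chainVec n H F q g''
        rw [double_strip n H F q g (metzler_det_ne hF1 hω1 hcert1)
          (metzler_det_ne hF0 hω0 hcert0)]
      have hevq : Even q := by
        rcases hev with ⟨k, hk⟩
        rcases k with _ | k
        · omega
        · exact ⟨k, by omega⟩
      have IHq := IH q (by omega) hevq ω g''
        (fun i hi => hF i (by omega)) (fun i hi => hH i (by omega)) hg''0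
        (fun i hi => hω i (by omega)) (fun i hi => hmid i (by omega))
        (fun i hi j => by
          subst hi
          have h1 := hmid i (by omega) j
          have h2 := hg''1 j
          have h3 : g'' (Fin.cast (congrArg n rfl) j) = g'' j := rfl
          rw [h3]
          linarith)
      constructor
      · intro j
        rw [hchain]
        exact IHq.1 j
      · intro _ j
        rw [hchain]
        rcases Nat.eq_zero_or_pos q with rfl | hqpos
        · have : chainVec n H F 0 g'' = g'' := rfl
          rw [this]
          exact hg''1 j
        · exact IHq.2 hqpos j

end Chain

section Ext
variable (n : ℕ → ℕ)

noncomputable def ext2 (q : ℕ) (ω : ∀ i : ℕ, Fin (n (i + 1)) → ℝ)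
    (a : Fin (n (q + 1)) → ℝ) (b : Fin (n (q + 2)) → ℝ) :
    ∀ i : ℕ, Fin (n (i + 1)) → ℝ :=
  fun i =>
    if h : i = q then Eq.mpr (congrArg (fun k => Fin (n (k + 1)) → ℝ) h) a
    else if h' : i = q + 1 then Eq.mpr (congrArg (fun k => Fin (n (k + 1)) → ℝ) h') b
    else ω i

lemma ext2_lt {q i : ℕ} (ω a b) (h : i < q) : ext2 n q ω a b i = ω i := by
  have h2 : i ≠ q + 1 := by omega
  simp [ext2, Nat.ne_of_lt h, h2]

lemma ext2_q {q : ℕ} (ω a b) : ext2 n q ω a b q = a := by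
  simp [ext2]

lemma ext2_q1 {q : ℕ} (ω a b) : ext2 n q ω a b (q + 1) = b := by
  simp [ext2]

end Ext

lemma mulVec_comb {a b : ℕ} (A : Matrix (Fin a) (Fin b) ℝ) (x y : Fin b → ℝ) (ε : ℝ)
    (k : Fin a) : (A.mulVec (fun j => x j + ε * y j)) k = A.mulVec x k + ε * A.mulVec y k := by
  simp only [Matrix.mulVec, dotProduct, Finset.mul_sum, ← Finset.sum_add_distrib]
  congr 1
  funext j
  ring

section ChainCert
variable (n : ℕ → ℕ)
  (H : ∀ i : ℕ, Matrix (Fin (n i)) (Fin (n (i + 1))) ℝ)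
  (F : ∀ i : ℕ, Matrix (Fin (n (i + 1))) (Fin (n (i + 1))) ℝ)
  (v : Fin (n 0) → ℝ)

lemma chain_cert :
    ∀ q : ℕ, Even q → ∀ (g : Fin (n q) → ℝ),
    (∀ i, i < q → Metzler (F i)) →
    (∀ i, i < q → ∀ j k, 0 ≤ H i j k) →
    (∀ j, 0 ≤ g j) →
    (∀ i, i < q → ∃ p : Fin (n (i + 1)) → ℝ,
        (∀ j, 0 < p j) ∧ ∀ j, (F i).mulVec p j < 0) →
    (∀ j, chainVec n H F q g j < v j) →
    ∃ ω : ∀ i : ℕ, Fin (n (i + 1)) → ℝ,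
      (∀ i, i < q → ∀ j, 0 < ω i j) ∧
      (0 < q → ∀ j, (H 0).mulVec (ω 0) j < v j) ∧
      (∀ i, i + 1 < q → ∀ j,
        (F i).mulVec (ω i) j + (H (i + 1)).mulVec (ω (i + 1)) j < 0) ∧
      (∀ i (h : i + 1 = q), ∀ j, (F i).mulVec (ω i) j +
        g (Fin.cast (congrArg n h) j) < 0) := by
  intro q
  induction q using Nat.strong_induction_on with
  | _ q IH =>
    match q with
    | 0 =>
      intro _ g _ _ _ _ _
      exact ⟨fun i => fun _ => 1, fun i hi => absurd hi (by omega),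
        fun h => absurd h (by omega), fun i hi => absurd hi (by omega),
        fun i hi => absurd hi (by omega)⟩
    | 1 =>
      intro hev
      exact absurd hev (by decide)
    | (q + 2) =>
      intro hev g hF hH hg hcert hv
      have hF1 : Metzler (F (q + 1)) := hF (q + 1) (by omega)
      have hF0 : Metzler (F q) := hF q (by omega)
      obtain ⟨p1, hp1, hFp1⟩ := hcert (q + 1) (by omega)
      obtain ⟨p0, hp0, hFp0⟩ := hcert q (by omega)
      set u : Fin (n (q + 2)) → ℝ := -((F (q + 1))⁻¹.mulVec g) with hu
      have hu0 : ∀ j, 0 ≤ u j := sandwich_lower hF1 hp1 hFp1 hg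
      set w : Fin (n (q + 1)) → ℝ := (H (q + 1)).mulVec u with hw
      have hw0 : ∀ j, 0 ≤ w j := mulVec_nonneg (hH (q + 1) (by omega)) hu0
      set u'' : Fin (n (q + 1)) → ℝ := -((F q)⁻¹.mulVec w) with hu''
      have hu''0 : ∀ j, 0 ≤ u'' j := sandwich_lower hF0 hp0 hFp0 hw0
      set g'' : Fin (n q) → ℝ := (H q).mulVec u'' with hg''
      have hg''0 : ∀ j, 0 ≤ g'' j := mulVec_nonneg (hH q (by omega)) hu''0
      have hFu : (F (q + 1)).mulVec u = -g := metzler_mulVec_inv hF1 hp1 hFp1 g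
      have hFu'' : (F q).mulVec u'' = -w := metzler_mulVec_inv hF0 hp0 hFp0 w
      have hchain : chainVec n H F (q + 2) g = chainVec n H F q g'' := by
        show chainVec n H F q ((H q * (F q)⁻¹).mulVec ((H (q + 1) * (F (q + 1))⁻¹).mulVec g))
          = chainVec n H F q g''
        rw [double_strip n H F q g (metzler_det_ne hF1 hp1 hFp1)
          (metzler_det_ne hF0 hp0 hFp0)]
      have hevq : Even q := by
        rcases hev with ⟨k, hk⟩
        rcases k with _ | k
        · omega
        · exact ⟨k, by omega⟩
      have hv' : ∀ j, chainVec n H F q g'' j < v j := by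
        intro j
        rw [← hchain]
        exact hv j
      obtain ⟨ω, hωpos, hω0v, hωmid, hωend⟩ := IH q (by omega) hevq g''
        (fun i hi => hF i (by omega)) (fun i hi => hH i (by omega)) hg''0
        (fun i hi => hcert i (by omega)) hv'
      -- choose ε₁
      have hchoice1 : ∃ ε₁ : ℝ, 0 < ε₁ ∧
          (∀ i (h : i + 1 = q), ∀ j, (F i).mulVec (ω i) j + g'' (Fin.cast (congrArg n h) j)
              + ε₁ * (H q).mulVec p0 (Fin.cast (congrArg n h) j) < 0) ∧
          (∀ h : q = 0, ∀ j : Fin (n q),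
            g'' j + ε₁ * (H q).mulVec p0 j < v (Fin.cast (congrArg n h) j)) := by
        rcases q with _ | r
        · obtain ⟨ε₁, hε₁, hmain⟩ := exists_pos_eps g'' ((H 0).mulVec p0) v
            (fun j => by simpa [chainVec] using hv' j)
          exact ⟨ε₁, hε₁, fun i hi => absurd hi (by omega), fun h j => hmain j⟩
        · obtain ⟨ε₁, hε₁, hmain⟩ := exists_pos_eps
            (fun j => (F r).mulVec (ω r) j + g'' (Fin.cast (congrArg n rfl) j))
            (fun j => (H (r + 1)).mulVec p0 (Fin.cast (congrArg n (rfl : r + 1 = r + 1)) j))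
            (fun _ => 0)
            (fun j => by simpa using hωend r rfl j)
          refine ⟨ε₁, hε₁, fun i hi j => ?_, fun h => absurd h (by omega)⟩
          have hir : i = r := by omega
          subst hir
          simpa using hmain j
      obtain ⟨ε₁, hε₁, hεend, hεv⟩ := hchoice1
      set a : Fin (n (q + 1)) → ℝ := fun j => u'' j + ε₁ * p0 j with ha
      have hapos : ∀ j, 0 < a j := fun j => by
        have := hu''0 j; have := hp0 j; simp only [ha]; nlinarith
      -- choose ε₂
      obtain ⟨ε₂, hε₂, hεmid⟩ := exists_pos_eps
        (fun j => ε₁ * (F q).mulVec p0 j) ((H (q + 1)).mulVec p1) (fun _ => 0)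
        (fun j => by simpa using mul_neg_of_pos_of_neg hε₁ (hFp0 j))
      set b : Fin (n (q + 2)) → ℝ := fun j => u j + ε₂ * p1 j with hb
      have hbpos : ∀ j, 0 < b j := fun j => by
        have := hu0 j; have := hp1 j; simp only [hb]; nlinarith
      refine ⟨ext2 n q ω a b, ?_, ?_, ?_, ?_⟩
      · intro i hi j
        rcases lt_trichotomy i q with h | h | h
        · rw [ext2_lt n ω a b h]
          exact hωpos i h j
        · subst h
          rw [ext2_q n ω a b]
          exact hapos j
        · have : i = q + 1 := by omega
          subst this
          rw [ext2_q1 n ω a b]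
          exact hbpos j
      · intro _ j
        rcases Nat.eq_zero_or_pos q with rfl | hqpos
        · rw [ext2_q n ω a b]
          have h5 := hεv rfl j
          rw [ha, mulVec_comb]
          simpa using h5
        · rw [ext2_lt n ω a b hqpos]
          exact hω0v hqpos j
      · intro i hi j
        rcases lt_trichotomy (i + 1) q with h | h | h
        · rw [ext2_lt n ω a b (by omega), ext2_lt n ω a b h]
          exact hωmid i h j
        · -- i + 1 = q
          have h' : i + 1 = q := h
          subst h'
          rw [ext2_lt n ω a b (by omega), ext2_q n ω a b]
          have h1 := hεend i rfl j
          rw [ha, mulVec_comb]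
          have h3 : g'' (Fin.cast (congrArg n (rfl : i + 1 = i + 1)) j)
              = (H (i + 1)).mulVec u'' j := rfl
          have h4 : (H (i + 1)).mulVec p0 (Fin.cast (congrArg n (rfl : i + 1 = i + 1)) j)
              = (H (i + 1)).mulVec p0 j := rfl
          rw [h3, h4] at h1
          linarith
        · -- i = q
          have hiq : i = q := by omega
          subst hiq
          rw [ext2_q n ω a b, ext2_q1 n ω a b, ha, hb, mulVec_comb, mulVec_comb, hFu'']
          have h5 := hεmid j
          simp only [Pi.zero_apply, Pi.neg_apply] at h5 ⊢
          linarith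
      · intro i hi j
        have : i = q + 1 := by omega
        subst this
        rw [ext2_q1 n ω a b]
        have hgj : g (Fin.cast (congrArg n hi) j) = g j := rfl
        rw [hgj]
        rw [hb, mulVec_comb, hFu]
        have h5 := mul_neg_of_pos_of_neg hε₂ (hFp1 j)
        simp only [Pi.neg_apply]
        linarith

end ChainCert

theorem metzler_chain_lemma (q : ℕ) (hq : 0 < q) (hq2 : Even q) (n : ℕ → ℕ)
    (H : ∀ i : ℕ, Matrix (Fin (n i)) (Fin (n (i + 1))) ℝ)
    (F : ∀ i : ℕ, Matrix (Fin (n (i + 1))) (Fin (n (i + 1))) ℝ)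
    (g : Fin (n q) → ℝ) (v : Fin (n 0) → ℝ)
    (hF : ∀ i, i < q → Metzler (F i))
    (hH : ∀ i, i < q → ∀ j k, 0 ≤ H i j k)
    (hg : ∀ j, 0 ≤ g j) :
    ((∀ i, i < q → Hurwitz (F i)) ∧ ∀ j, chainVec n H F q g j < v j) ↔
      ∃ ω : ∀ i : Fin q, Fin (n (i + 1)) → ℝ,
        (∀ i j, 0 < ω i j) ∧
        (∀ j, (H 0).mulVec (ω ⟨0, hq⟩) j < v j) ∧
        (∀ i : Fin q, ∀ h : (i : ℕ) + 1 < q,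
          ∀ j, (F i).mulVec (ω i) j + (H ((i : ℕ) + 1)).mulVec (ω ⟨(i : ℕ) + 1, h⟩) j < 0) ∧
        (∀ j, (F (q - 1)).mulVec (ω ⟨q - 1, Nat.sub_lt hq one_pos⟩) j
            + (show Fin (n q) → ℝ from g) (Fin.cast (congrArg n (by omega : q - 1 + 1 = q)) j) < 0) := by
  constructor
  · rintro ⟨hHur, hchain⟩
    obtain ⟨ωn, h1, h2, h3, h4⟩ := chain_cert n H F v q hq2 g hF hH hg
      (fun i hi => cert_of_hurwitz (hF i hi) (hHur i hi)) hchain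
    refine ⟨fun i => ωn i, fun i j => h1 i i.isLt j, h2 hq,
      fun i hlt j => h3 i hlt j, fun j => ?_⟩
    exact h4 (q - 1) (by omega) j
  · rintro ⟨ω, hpos, h0, hmid, hend⟩
    set ωn : ∀ i : ℕ, Fin (n (i + 1)) → ℝ :=
      fun i => if h : i < q then ω ⟨i, h⟩ else fun _ => 1 with hωn
    have hωn_eq : ∀ i (h : i < q), ωn i = ω ⟨i, h⟩ := fun i h => dif_pos h
    have hωnpos : ∀ i, i < q → ∀ j, 0 < ωn i j := fun i h j => by
      rw [hωn_eq i h]; exact hpos ⟨i, h⟩ j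
    have hmid' : ∀ i, i + 1 < q → ∀ j,
        (F i).mulVec (ωn i) j + (H (i + 1)).mulVec (ωn (i + 1)) j < 0 := by
      intro i h j
      rw [hωn_eq i (by omega), hωn_eq (i + 1) h]
      exact hmid ⟨i, by omega⟩ h j
    have hend' : ∀ i (h : i + 1 = q), ∀ j,
        (F i).mulVec (ωn i) j + g (Fin.cast (congrArg n h) j) < 0 := by
      intro i h j
      rw [hωn_eq i (by omega)]
      have hieq : i = q - 1 := by omega
      subst hieq
      exact hend j
    constructor
    · intro i hi
      rcases (show i + 1 < q ∨ i + 1 = q by omega) with h | h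
      · refine hurwitz_of_cert (hF i hi) (hωnpos i hi) (fun j => ?_)
        have h8 := hmid' i h j
        have hnn : 0 ≤ (H (i + 1)).mulVec (ωn (i + 1)) j :=
          mulVec_nonneg (hH (i + 1) h) (fun k => (hωnpos (i + 1) h k).le) j
        linarith
      · refine hurwitz_of_cert (hF i hi) (hωnpos i hi) (fun j => ?_)
        have h8 := hend' i h j
        have h9 := hg (Fin.cast (congrArg n h) j)
        linarith
    · intro j
      have hcb := chain_bound n H F q hq2 ωn g hF hH hg hωnpos hmid' hend'
      have h6 := hcb.2 hq j
      have h7 : (H 0).mulVec (ωn 0) j = (H 0).mulVec (ω ⟨0, hq⟩) j := by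
        rw [hωn_eq 0 hq]
      have h8 := h0 j
      linarith
end

section
/- Let F be an n×n Metzler and Hurwitz stable matrix, G ∈ ℝ^{n×m} and H ∈ ℝ^{p×n} entrywise nonnegative, and γ > 0. If there exists an entrywise positive vector u ∈ ℝⁿ such that Fᵀ u + Hᵀ 𝟙_p < 0 and Gᵀ u < γ 𝟙_m (entrywise), then 𝟙_pᵀ (−H F⁻¹ G) < γ 𝟙_mᵀ entrywise; i.e., every column sum of the nonnegative static-gain matrix −HF⁻¹G is strictly less than γ. -/
open Matrix

/-- Key lemma: if `A` is Metzler, `u > 0` with `A u < 0`, and `A v ≤ 0`, then `v ≥ 0`. -/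
lemma metzler_nonneg_aux {n : ℕ} (A : Matrix (Fin n) (Fin n) ℝ)
    (hA : ∀ i j, i ≠ j → 0 ≤ A i j)
    (u : Fin n → ℝ) (hu : ∀ i, 0 < u i)
    (hAu : ∀ i, A.mulVec u i < 0)
    (v : Fin n → ℝ) (hv : ∀ i, A.mulVec v i ≤ 0) :
    ∀ i, 0 ≤ v i := by
  by_contra hcon
  push_neg at hcon
  obtain ⟨k0, hk0⟩ := hcon
  have hne : (Finset.univ : Finset (Fin n)).Nonempty := ⟨k0, Finset.mem_univ _⟩
  obtain ⟨k, -, hk⟩ := Finset.exists_max_image Finset.univ (fun i => -v i / u i) hne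
  set c := -v k / u k with hc
  have hcpos : 0 < c := lt_of_lt_of_le (div_pos (neg_pos.2 hk0) (hu k0))
    (hk k0 (Finset.mem_univ _))
  have hcu : c * u k = -v k := div_mul_cancel₀ _ (hu k).ne'
  have hvk : v k = -(c * u k) := by linarith
  have hvj : ∀ j, -(c * u j) ≤ v j := by
    intro j
    have := hk j (Finset.mem_univ _)
    rw [div_le_iff₀ (hu j)] at this
    linarith
  have hterm : ∀ j ∈ Finset.univ, A k j * (-(c * u j)) ≤ A k j * v j := by
    intro j _
    rcases eq_or_ne j k with rfl | hjk
    · rw [hvk]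
    · exact mul_le_mul_of_nonneg_left (hvj j) (hA k j (Ne.symm hjk))
  have hsum := Finset.sum_le_sum hterm
  have heq : ∑ j, A k j * (-(c * u j)) = -(c * A.mulVec u k) := by
    simp only [Matrix.mulVec, dotProduct, Finset.mul_sum, ← Finset.sum_neg_distrib]
    exact Finset.sum_congr rfl fun j _ => by ring
  have hmv : A.mulVec v k = ∑ j, A k j * v j := rfl
  have hpos : 0 < -(c * A.mulVec u k) := by
    have := mul_neg_of_pos_of_neg hcpos (hAu k)
    linarith
  have := hv k
  rw [hmv] at this
  linarith [heq ▸ hsum]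

theorem l1_gain_bound (n m p : ℕ)
    (F : Matrix (Fin n) (Fin n) ℝ) (G : Matrix (Fin n) (Fin m) ℝ)
    (H : Matrix (Fin p) (Fin n) ℝ)
    (hF : Metzler F) (hFs : Hurwitz F)
    (hG : ∀ i j, 0 ≤ G i j) (hH : ∀ i j, 0 ≤ H i j)
    (γ : ℝ) (hγ : 0 < γ)
    (u : Fin n → ℝ) (hu : ∀ i, 0 < u i)
    (h1 : ∀ i, Fᵀ.mulVec u i + Hᵀ.mulVec (fun _ => (1 : ℝ)) i < 0)
    (h2 : ∀ j, Gᵀ.mulVec u j < γ) :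
    ∀ j, (fun _ => (1 : ℝ)) ⬝ᵥ (fun i => (-(H * F⁻¹ * G)) i j) < γ := by
  -- F is invertible since it is Hurwitz
  have hdet : IsUnit F.det := by
    by_contra hdet
    have hdet0 : F.det = 0 := by
      simpa [isUnit_iff_ne_zero] using hdet
    have hdetC : (F.map (Complex.ofReal ·)).det = 0 := by
      have h := (RingHom.map_det Complex.ofRealHom F).symm
      rw [RingHom.mapMatrix_apply] at h
      show (F.map Complex.ofRealHom).det = 0
      rw [h, hdet0]
      simp
    have hnu : ¬ IsUnit (F.map (Complex.ofReal ·)) := by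
      rw [Matrix.isUnit_iff_isUnit_det, hdetC]
      simp
    have h0 : (0 : ℂ) ∈ spectrum ℂ (F.map (Complex.ofReal ·)) :=
      (spectrum.zero_mem_iff ℂ).2 hnu
    have := hFs 0 h0
    simp at this
  have hinv : F⁻¹ * F = 1 := Matrix.nonsing_inv_mul F hdet
  -- the Metzler-positivity machinery applies to Fᵀ
  have hFT : ∀ i j, i ≠ j → 0 ≤ Fᵀ i j := fun i j hij => hF j i (Ne.symm hij)
  have hHsum : ∀ i, 0 ≤ Hᵀ.mulVec (fun _ => (1 : ℝ)) i := by
    intro i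
    show 0 ≤ ∑ q, Hᵀ i q * 1
    apply Finset.sum_nonneg
    intro q _
    simpa using hH q i
  have hFu : ∀ i, Fᵀ.mulVec u i < 0 := fun i => by linarith [h1 i, hHsum i]
  -- w := 𝟙ᵀ H (−F⁻¹)
  set w : Fin n → ℝ := Matrix.vecMul (fun _ => (1 : ℝ)) (H * (-F⁻¹)) with hw
  have hFw : ∀ i, Fᵀ.mulVec w i = -(Hᵀ.mulVec (fun _ => (1 : ℝ)) i) := by
    intro i
    rw [Matrix.mulVec_transpose, hw, Matrix.vecMul_vecMul]
    have : H * -F⁻¹ * F = -H := by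
      rw [Matrix.mul_assoc, Matrix.neg_mul, hinv]
      simp
    rw [this]
    simp [Matrix.mulVec_transpose, Matrix.vecMul_neg]
  -- w ≥ 0
  have hw0 : ∀ i, 0 ≤ w i := by
    refine metzler_nonneg_aux Fᵀ hFT u hu hFu w (fun i => ?_)
    rw [hFw i]
    linarith [hHsum i]
  -- u − w ≥ 0
  have huw : ∀ i, 0 ≤ u i - w i := by
    refine metzler_nonneg_aux Fᵀ hFT u hu hFu _ (fun i => ?_)
    have hsub : Fᵀ.mulVec (u - w) i = Fᵀ.mulVec u i - Fᵀ.mulVec w i := by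
      rw [Matrix.mulVec_sub]
      rfl
    have hdefeq : (Fᵀ.mulVec fun i => u i - w i) i = Fᵀ.mulVec (u - w) i := rfl
    rw [hdefeq, hsub, hFw i]
    linarith [h1 i]
  intro j
  -- rewrite the goal as (w ᵥ* G) j
  have hM : -(H * F⁻¹ * G) = H * -F⁻¹ * G := by
    rw [Matrix.mul_assoc, Matrix.mul_assoc, Matrix.neg_mul]
    simp [Matrix.mul_neg]
  have hgoal : (fun _ => (1 : ℝ)) ⬝ᵥ (fun i => (-(H * F⁻¹ * G)) i j)
      = ∑ i, w i * G i j := by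
    rw [hM]
    show ((fun _ => (1 : ℝ)) ᵥ* (H * -F⁻¹ * G)) j = (w ᵥ* G) j
    rw [← Matrix.vecMul_vecMul, hw]
  rw [hgoal]
  have hle : ∑ i, w i * G i j ≤ ∑ i, u i * G i j := by
    apply Finset.sum_le_sum
    intro i _
    exact mul_le_mul_of_nonneg_right (by linarith [huw i]) (hG i j)
  have heq2 : ∑ i, u i * G i j = Gᵀ.mulVec u j := by
    simp [Matrix.mulVec, dotProduct, Matrix.transpose_apply, mul_comm]
  linarith [h2 j, heq2 ▸ hle]
end

section
/- Let F be an n×n Metzler and Hurwitz stable matrix, G ∈ ℝ^{n×m} and H ∈ ℝ^{p×n} entrywise nonnegative, and γ > 0. If there exists an entrywise positive vector v ∈ ℝⁿ such that F v + G 𝟙_m < 0 and H v < γ 𝟙_p (entrywise), then every row sum of the nonnegative matrix −HF⁻¹G is strictly less than γ, i.e., (−HF⁻¹G) 𝟙_m < γ 𝟙_p entrywise. -/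
open Matrix

/-- Key positivity lemma: if `F` is Metzler and there is a positive vector `v`
with `F v < 0`, then `F u ≥ 0` implies `u ≤ 0`. -/
lemma metzler_key {n : ℕ} (F : Matrix (Fin n) (Fin n) ℝ) (hF : Metzler F)
    (v : Fin n → ℝ) (hv : ∀ i, 0 < v i) (hFv : ∀ i, F.mulVec v i < 0)
    (u : Fin n → ℝ) (hu : ∀ i, 0 ≤ F.mulVec u i) : ∀ i, u i ≤ 0 := by
  intro i
  by_contra hcon
  push_neg at hcon
  obtain ⟨k, -, hk⟩ := Finset.exists_max_image Finset.univ (fun j => u j / v j)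
    ⟨i, Finset.mem_univ i⟩
  set t := u k / v k with ht
  have ht0 : 0 < t := lt_of_lt_of_le (div_pos hcon (hv i)) (hk i (Finset.mem_univ i))
  set z : Fin n → ℝ := fun j => t * v j - u j with hz
  have hznn : ∀ j, 0 ≤ z j := by
    intro j
    have h1 : u j / v j ≤ t := hk j (Finset.mem_univ j)
    have h2 : u j ≤ t * v j := (div_le_iff₀ (hv j)).mp h1
    simp [hz]; linarith
  have hzk : z k = 0 := by
    simp only [hz, ht]
    rw [div_mul_cancel₀ _ (hv k).ne', sub_self]
  have expand : F.mulVec z k = t * F.mulVec v k - F.mulVec u k := by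
    simp only [Matrix.mulVec, dotProduct, hz, mul_sub, Finset.sum_sub_distrib,
      Finset.mul_sum, mul_left_comm]
  have hneg : F.mulVec z k < 0 := by
    rw [expand]
    have := mul_neg_of_pos_of_neg ht0 (hFv k)
    linarith [hu k]
  have hpos : 0 ≤ F.mulVec z k := by
    unfold Matrix.mulVec dotProduct
    apply Finset.sum_nonneg
    intro j _
    rcases eq_or_ne j k with rfl | hjk
    · rw [hzk]; simp
    · exact mul_nonneg (hF k j (Ne.symm hjk)) (hznn j)
  linarith

theorem linf_gain_bound (n m p : ℕ)
    (F : Matrix (Fin n) (Fin n) ℝ) (G : Matrix (Fin n) (Fin m) ℝ)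
    (H : Matrix (Fin p) (Fin n) ℝ)
    (hF : Metzler F) (hFs : Hurwitz F)
    (hG : ∀ i j, 0 ≤ G i j) (hH : ∀ i j, 0 ≤ H i j)
    (γ : ℝ) (hγ : 0 < γ)
    (v : Fin n → ℝ) (hv : ∀ i, 0 < v i)
    (h1 : ∀ i, F.mulVec v i + G.mulVec (fun _ => (1 : ℝ)) i < 0)
    (h2 : ∀ i, H.mulVec v i < γ) :
    ∀ i, (-(H * F⁻¹ * G)).mulVec (fun _ => (1 : ℝ)) i < γ := by
  -- F is invertible since 0 is not an eigenvalue
  have hdet : IsUnit F.det := by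
    rw [isUnit_iff_ne_zero]
    intro h0
    have hmap : (F.map (Complex.ofReal ·)).det = 0 := by
      have h := (RingHom.map_det Complex.ofRealHom F).symm
      simp only [RingHom.mapMatrix_apply] at h
      rw [show (F.map (Complex.ofReal ·)) = F.map ⇑Complex.ofRealHom from rfl, h, h0,
        map_zero]
    have hnu : ¬ IsUnit (F.map (Complex.ofReal ·)) := by
      rw [Matrix.isUnit_iff_isUnit_det, hmap]
      exact not_isUnit_zero
    have h0mem : (0 : ℂ) ∈ spectrum ℂ (F.map (Complex.ofReal ·)) :=
      (spectrum.zero_mem_iff ℂ).mpr hnu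
    have := hFs 0 h0mem
    simp at this
  -- w := Fv + G𝟙 is entrywise negative
  set e : Fin m → ℝ := fun _ => (1 : ℝ) with he
  have hFv : ∀ i, F.mulVec v i < 0 := by
    intro i
    have hGe : 0 ≤ G.mulVec e i := by
      simp only [Matrix.mulVec, dotProduct]
      exact Finset.sum_nonneg fun j _ => by simpa [he] using hG i j
    linarith [h1 i]
  -- u := -(v + F⁻¹ G 𝟙) satisfies F u ≥ 0, hence u ≤ 0
  set u : Fin n → ℝ := -(v + (F⁻¹).mulVec (G.mulVec e)) with hu
  have hFu : ∀ i, 0 ≤ F.mulVec u i := by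
    intro i
    have hinv : F.mulVec ((F⁻¹).mulVec (G.mulVec e)) = G.mulVec e := by
      rw [Matrix.mulVec_mulVec, Matrix.mul_nonsing_inv F hdet, Matrix.one_mulVec]
    have : F.mulVec u = -(F.mulVec v + G.mulVec e) := by
      rw [hu, Matrix.mulVec_neg, Matrix.mulVec_add, hinv]
    rw [this]
    simp only [Pi.neg_apply, Pi.add_apply]
    linarith [h1 i]
  have hule : ∀ i, u i ≤ 0 := metzler_key F hF v hv hFv u hFu
  -- hence -(F⁻¹ G 𝟙) ≤ v entrywise
  have hkey : ∀ j, -((F⁻¹).mulVec (G.mulVec e)) j ≤ v j := by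
    intro j
    have := hule j
    simp only [hu, Pi.neg_apply, Pi.add_apply] at this ⊢
    linarith
  intro i
  have hrw : (-(H * F⁻¹ * G)).mulVec e i
      = H.mulVec (-(F⁻¹).mulVec (G.mulVec e)) i := by
    rw [Matrix.neg_mulVec, ← Matrix.mulVec_mulVec, ← Matrix.mulVec_mulVec,
      ← Matrix.mulVec_neg]
  calc (-(H * F⁻¹ * G)).mulVec e i
      = H.mulVec (-(F⁻¹).mulVec (G.mulVec e)) i := hrw
    _ ≤ H.mulVec v i := by
        simp only [Matrix.mulVec, dotProduct]
        apply Finset.sum_le_sum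
        intro j _
        exact mul_le_mul_of_nonneg_left (hkey j) (hH i j)
    _ < γ := h2 i
end
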